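/- arXiv:2102.10862 — 6 statements merged into one kernel-verified Lean document; each statement's English description precedes it below -/
import Mathlib

section
/- Let k ≥ 2, n ≥ r ≥ 1 be integers and c ∈ (0, 1/2). Let w₁,…,w_k be weighted r-uniform hypergraphs on [n] with wᵢ*([n] \ {j}) ≥ 1 − c for all i ∈ [k], j ∈ [n]. For nonempty S ⊆ [n], let φ(S) ∈ ℝ^{k−1} be the vector with i-th component wᵢ*(S) − w_k*(S). Then (1/|S|) Σ_{j ∈ S} ‖φ(S \ {j})‖² ≤ ‖φ(S)‖² − (2r/|S|)(‖φ(S)‖² − (k−1)c), where ‖·‖ is the Euclidean norm. -/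
open Finset

noncomputable def wstar {n : ℕ} (r : ℕ) (w : Finset (Fin n) → ℝ) (S : Finset (Fin n)) : ℝ :=
  ∑ R ∈ S.powerset.filter (fun R => R.card = r), w R

/-- `phi r k w hk S i = wᵢ*(S) − w_k*(S)` for `i ∈ [k−1]`. -/
noncomputable def phi {n : ℕ} (r k : ℕ) (w : Fin k → Finset (Fin n) → ℝ) (hk : 0 < k)
    (S : Finset (Fin n)) : Fin (k - 1) → ℝ :=
  fun i => wstar r (w (Fin.castLE (Nat.sub_le k 1) i)) S
    - wstar r (w ⟨k - 1, Nat.sub_lt hk one_pos⟩) S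

lemma wstar_mono {n r : ℕ} (v : Finset (Fin n) → ℝ) (hv : ∀ R, 0 ≤ v R)
    {S T : Finset (Fin n)} (hST : S ⊆ T) : wstar r v S ≤ wstar r v T := by
  apply Finset.sum_le_sum_of_subset_of_nonneg
  · intro R hR
    simp only [mem_filter, mem_powerset] at hR ⊢
    exact ⟨hR.1.trans hST, hR.2⟩
  · intro R _ _; exact hv R

lemma filterEraseCard {n r : ℕ} (S : Finset (Fin n)) (j : Fin n) :
    ((S.erase j).powerset.filter (fun R => R.card = r))
      = ((S.powerset.filter (fun R => R.card = r)).filter (fun R => j ∉ R)) := by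
  ext R
  simp only [mem_filter, mem_powerset, Finset.subset_erase]
  tauto

lemma wstar_split {n r : ℕ} (v : Finset (Fin n) → ℝ) (S : Finset (Fin n)) (j : Fin n) :
    wstar r v S = wstar r v (S.erase j)
      + ∑ R ∈ ((S.powerset.filter (fun R => R.card = r)).filter (fun R => j ∈ R)), v R := by
  rw [wstar, wstar, filterEraseCard,
    ← Finset.sum_filter_add_sum_filter_not (S.powerset.filter (fun R => R.card = r))
      (fun R => j ∉ R) v]
  simp only [not_not]

lemma sum_wstar_erase {n r : ℕ} (v : Finset (Fin n) → ℝ) (S : Finset (Fin n)) :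
    ∑ j ∈ S, wstar r v (S.erase j) = ((S.card : ℝ) - r) * wstar r v S := by
  have h1 : ∀ j, wstar r v (S.erase j)
      = ∑ R ∈ (S.powerset.filter (fun R => R.card = r)), if j ∉ R then v R else 0 := by
    intro j
    rw [wstar, filterEraseCard, Finset.sum_filter]
  simp only [h1]
  rw [Finset.sum_comm]
  rw [wstar, Finset.mul_sum]
  apply Finset.sum_congr rfl
  intro R hR
  simp only [mem_filter, mem_powerset] at hR
  rw [← Finset.sum_filter, Finset.sum_const, nsmul_eq_mul]
  have hcard : (S.filter (fun j => j ∉ R)) = S \ R := by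
    ext x; simp [mem_sdiff]
  rw [hcard, Finset.card_sdiff_of_subset hR.1, hR.2, Nat.cast_sub (hR.2 ▸ Finset.card_le_card hR.1)]

lemma diff_nonneg' {n : ℕ} (r : ℕ) (v : Finset (Fin n) → ℝ) (hv : ∀ R, 0 ≤ v R)
    (S : Finset (Fin n)) (j : Fin n) :
    0 ≤ wstar r v S - wstar r v (S.erase j) :=
  sub_nonneg.mpr (wstar_mono v hv (Finset.erase_subset j S))

lemma diff_le_c {n r : ℕ} {c : ℝ} (v : Finset (Fin n) → ℝ) (hv : ∀ R, 0 ≤ v R)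
    (hv1 : wstar r v Finset.univ = 1)
    (S : Finset (Fin n)) (j : Fin n) (hd : 1 - c ≤ wstar r v (Finset.univ.erase j)) :
    wstar r v S - wstar r v (S.erase j) ≤ c := by
  have h1 := wstar_split v S j (r := r)
  have h2 := wstar_split v Finset.univ j (r := r)
  have hle : ∑ R ∈ ((S.powerset.filter (fun R => R.card = r)).filter (fun R => j ∈ R)), v R
      ≤ ∑ R ∈ (((Finset.univ : Finset (Fin n)).powerset.filter
          (fun R => R.card = r)).filter (fun R => j ∈ R)), v R := by
    apply Finset.sum_le_sum_of_subset_of_nonneg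
    · intro R hR
      simp only [mem_filter, mem_powerset] at hR ⊢
      exact ⟨⟨Finset.subset_univ R, hR.1.2⟩, hR.2⟩
    · intro R _ _; exact hv R
  linarith

lemma wstar_le_one {n r : ℕ} (v : Finset (Fin n) → ℝ) (hv : ∀ R, 0 ≤ v R)
    (hv1 : wstar r v Finset.univ = 1) (S : Finset (Fin n)) : wstar r v S ≤ 1 :=
  hv1 ▸ wstar_mono v hv (Finset.subset_univ S)

lemma per_pair {n r : ℕ} {c : ℝ} (hc0 : 0 ≤ c)
    (u v : Finset (Fin n) → ℝ)
    (hu0 : ∀ R, 0 ≤ u R) (hv0 : ∀ R, 0 ≤ v R)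
    (hu1 : wstar r u Finset.univ = 1) (hv1 : wstar r v Finset.univ = 1)
    (hud : ∀ j, 1 - c ≤ wstar r u (Finset.univ.erase j))
    (hvd : ∀ j, 1 - c ≤ wstar r v (Finset.univ.erase j))
    (S : Finset (Fin n)) :
    ∑ j ∈ S, (wstar r u (S.erase j) - wstar r v (S.erase j)) ^ 2
      ≤ (S.card : ℝ) * (wstar r u S - wstar r v S) ^ 2
        - 2 * r * (wstar r u S - wstar r v S) ^ 2 + 2 * r * c := by
  set A := wstar r u S with hA
  set B := wstar r v S with hB
  set φ := A - B with hφ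
  set a : Fin n → ℝ := fun j => A - wstar r u (S.erase j) with ha
  set b : Fin n → ℝ := fun j => B - wstar r v (S.erase j) with hb
  have hsa : ∑ j ∈ S, a j = (r : ℝ) * A := by
    simp only [ha, Finset.sum_sub_distrib, sum_wstar_erase, Finset.sum_const, nsmul_eq_mul]
    ring
  have hsb : ∑ j ∈ S, b j = (r : ℝ) * B := by
    simp only [hb, Finset.sum_sub_distrib, sum_wstar_erase, Finset.sum_const, nsmul_eq_mul]
    ring
  have hrew : ∀ j, (wstar r u (S.erase j) - wstar r v (S.erase j)) ^ 2
      = φ ^ 2 - 2 * φ * (a j - b j) + (a j - b j) ^ 2 := by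
    intro j; simp only [ha, hb, hφ, hA, hB]; ring
  have hsq : ∀ j ∈ S, (a j - b j) ^ 2 ≤ c * (a j + b j) := by
    intro j _
    have h1 := diff_nonneg' r u hu0 S j
    have h2 := diff_nonneg' r v hv0 S j
    have h3 := diff_le_c u hu0 hu1 S j (hud j)
    have h4 := diff_le_c v hv0 hv1 S j (hvd j)
    simp only [ha, hb]
    nlinarith [h1, h2, h3, h4]
  have hsum : ∑ j ∈ S, (a j - b j) ^ 2 ≤ c * ((r : ℝ) * A + (r : ℝ) * B) := by
    calc ∑ j ∈ S, (a j - b j) ^ 2 ≤ ∑ j ∈ S, c * (a j + b j) := Finset.sum_le_sum hsq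
    _ = c * ((r : ℝ) * A + (r : ℝ) * B) := by
        rw [← Finset.mul_sum, Finset.sum_add_distrib, hsa, hsb]
  have hA1 : A ≤ 1 := wstar_le_one u hu0 hu1 S
  have hB1 : B ≤ 1 := wstar_le_one v hv0 hv1 S
  have hsum2 : ∑ j ∈ S, (a j - b j) ^ 2 ≤ 2 * r * c := by
    have hr0 : (0:ℝ) ≤ r := Nat.cast_nonneg r
    have hAB : (r : ℝ) * A + (r : ℝ) * B ≤ 2 * r := by nlinarith
    have : c * ((r : ℝ) * A + (r : ℝ) * B) ≤ c * (2 * r) :=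
      mul_le_mul_of_nonneg_left hAB hc0
    nlinarith
  calc ∑ j ∈ S, (wstar r u (S.erase j) - wstar r v (S.erase j)) ^ 2
      = ∑ j ∈ S, (φ ^ 2 - 2 * φ * (a j - b j) + (a j - b j) ^ 2) := by
        exact Finset.sum_congr rfl (fun j _ => hrew j)
    _ = (S.card : ℝ) * φ ^ 2 - 2 * φ * ((r : ℝ) * A - (r : ℝ) * B)
          + ∑ j ∈ S, (a j - b j) ^ 2 := by
        rw [Finset.sum_add_distrib, Finset.sum_sub_distrib, Finset.sum_const, nsmul_eq_mul,
          ← Finset.mul_sum, Finset.sum_sub_distrib, hsa, hsb]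
    _ ≤ (S.card : ℝ) * φ ^ 2 - 2 * r * φ ^ 2 + 2 * r * c := by
        have : 2 * φ * ((r : ℝ) * A - (r : ℝ) * B) = 2 * r * φ ^ 2 := by
          simp only [hφ]; ring
        rw [this]; linarith

theorem stmt2 (k n r : ℕ) (hk : 2 ≤ k) (hr : 1 ≤ r) (hrn : r ≤ n)
    (c : ℝ) (hc : 0 < c) (hc2 : c < 1/2)
    (w : Fin k → Finset (Fin n) → ℝ)
    (hw0 : ∀ i R, 0 ≤ w i R)
    (hw1 : ∀ i, ∑ R ∈ Finset.univ.powerset.filter (fun R => R.card = r), w i R = 1)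
    (hdeg : ∀ i, ∀ j : Fin n, 1 - c ≤ wstar r (w i) (Finset.univ.erase j))
    (S : Finset (Fin n)) (hS : S.Nonempty) :
    (S.card : ℝ)⁻¹ * ∑ j ∈ S, ∑ i, (phi r k w (by omega) (S.erase j) i) ^ 2 ≤
      (∑ i, (phi r k w (by omega) S i) ^ 2)
        - (2 * r / S.card) * ((∑ i, (phi r k w (by omega) S i) ^ 2) - ((k : ℝ) - 1) * c) := by
  have hk0 : 0 < k := by omega
  have hs0 : (0:ℝ) < (S.card : ℝ) := by
    exact_mod_cast Finset.card_pos.mpr hS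
  have hw1' : ∀ i, wstar r (w i) Finset.univ = 1 := fun i => hw1 i
  -- key bound on the double sum
  have key : ∑ j ∈ S, ∑ i, (phi r k w hk0 (S.erase j) i) ^ 2
      ≤ (S.card : ℝ) * (∑ i, (phi r k w hk0 S i) ^ 2)
        - 2 * r * ((∑ i, (phi r k w hk0 S i) ^ 2) - ((k : ℝ) - 1) * c) := by
    rw [Finset.sum_comm]
    have hper : ∀ i : Fin (k - 1),
        ∑ j ∈ S, (phi r k w hk0 (S.erase j) i) ^ 2
          ≤ (S.card : ℝ) * (phi r k w hk0 S i) ^ 2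
            - 2 * r * (phi r k w hk0 S i) ^ 2 + 2 * r * c := by
      intro i
      exact per_pair hc.le (w (Fin.castLE (Nat.sub_le k 1) i))
        (w ⟨k - 1, Nat.sub_lt hk0 one_pos⟩) (hw0 _) (hw0 _) (hw1' _) (hw1' _)
        (hdeg _) (hdeg _) S
    calc ∑ i, ∑ j ∈ S, (phi r k w hk0 (S.erase j) i) ^ 2
        ≤ ∑ i : Fin (k-1), ((S.card : ℝ) * (phi r k w hk0 S i) ^ 2
            - 2 * r * (phi r k w hk0 S i) ^ 2 + 2 * r * c) :=
          Finset.sum_le_sum (fun i _ => hper i)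
      _ = (S.card : ℝ) * (∑ i, (phi r k w hk0 S i) ^ 2)
            - 2 * r * ((∑ i, (phi r k w hk0 S i) ^ 2) - ((k : ℝ) - 1) * c) := by
          rw [Finset.sum_add_distrib, Finset.sum_sub_distrib, ← Finset.mul_sum,
            ← Finset.mul_sum, Finset.sum_const, Finset.card_univ, Fintype.card_fin,
            nsmul_eq_mul]
          have : ((k - 1 : ℕ) : ℝ) = (k : ℝ) - 1 := by
            rw [Nat.cast_sub (by omega)]; norm_num
          rw [this]; ring
  rw [inv_mul_le_iff₀ hs0]
  have heq : ((∑ i, (phi r k w hk0 S i) ^ 2)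
      - (2 * r / (S.card : ℝ)) * ((∑ i, (phi r k w hk0 S i) ^ 2) - ((k : ℝ) - 1) * c))
        * (S.card : ℝ)
      = (S.card : ℝ) * (∑ i, (phi r k w hk0 S i) ^ 2)
        - 2 * r * ((∑ i, (phi r k w hk0 S i) ^ 2) - ((k : ℝ) - 1) * c) := by
    field_simp
  linarith [key]
end

section
/- Let k ≥ 2, n ≥ r ≥ 1 be integers and c ∈ (0, 1/2). Let w₁,…,w_k be weighted r-uniform hypergraphs on [n] with wᵢ*([n] \ {j}) ≥ 1 − c for all i ∈ [k] and j ∈ [n]. Then there exists a chain of sets ∅ ⊊ S₁ ⊊ S₂ ⊊ … ⊊ Sₙ = [n] (so |S_j| = j) such that |w_{i₁}*(S_j) − w_{i₂}*(S_j)| ≤ √(2(k−1)c) for all i₁, i₂ ∈ [k] and j ∈ [n]. -/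
open Finset

namespace Stmt3Aux

noncomputable def dW {n : ℕ} (r : ℕ) (w : Finset (Fin n) → ℝ) (v : Fin n)
    (S : Finset (Fin n)) : ℝ :=
  ∑ R ∈ S.powerset.filter (fun R => R.card = r ∧ v ∈ R), w R

noncomputable def Vfn (k : ℕ) {n : ℕ} (r : ℕ) (w : Fin k → Finset (Fin n) → ℝ)
    (S : Finset (Fin n)) : ℝ :=
  ∑ i, (wstar r (w i) S - (∑ i', wstar r (w i') S) / k) ^ 2

lemma filter_eq {n : ℕ} (r : ℕ) (v : Fin n) (S : Finset (Fin n)) :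
    S.powerset.filter (fun R => R.card = r ∧ v ∉ R) =
      (S.erase v).powerset.filter (fun R => R.card = r) := by
  ext R
  simp only [Finset.mem_filter, Finset.mem_powerset, Finset.subset_erase]
  tauto

lemma wstar_split {n : ℕ} (r : ℕ) (w : Finset (Fin n) → ℝ) (v : Fin n) (S : Finset (Fin n)) :
    wstar r w S = wstar r w (S.erase v) + dW r w v S := by
  unfold wstar dW
  rw [← Finset.sum_filter_add_sum_filter_not (S.powerset.filter fun R => R.card = r)
    (fun R => v ∈ R) w, Finset.filter_filter, Finset.filter_filter, filter_eq]
  ring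

lemma sum_dW {n : ℕ} (r : ℕ) (w : Finset (Fin n) → ℝ) (S : Finset (Fin n)) :
    ∑ v ∈ S, dW r w v S = r * wstar r w S := by
  unfold dW wstar
  have h1 : ∀ v : Fin n, S.powerset.filter (fun R => R.card = r ∧ v ∈ R)
      = (S.powerset.filter fun R => R.card = r).filter (fun R => v ∈ R) := by
    intro v; rw [Finset.filter_filter]
  calc ∑ v ∈ S, ∑ R ∈ S.powerset.filter (fun R => R.card = r ∧ v ∈ R), w R
      = ∑ v ∈ S, ∑ R ∈ S.powerset.filter (fun R => R.card = r), if v ∈ R then w R else 0 := by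
        refine Finset.sum_congr rfl fun v _ => ?_
        rw [h1, Finset.sum_filter]
    _ = ∑ R ∈ S.powerset.filter (fun R => R.card = r), ∑ v ∈ S, if v ∈ R then w R else 0 :=
        Finset.sum_comm
    _ = ∑ R ∈ S.powerset.filter (fun R => R.card = r), (r : ℝ) * w R := by
        refine Finset.sum_congr rfl fun R hR => ?_
        simp only [Finset.mem_filter, Finset.mem_powerset] at hR
        rw [Finset.sum_ite_mem, Finset.inter_eq_right.mpr hR.1, Finset.sum_const, hR.2,
          nsmul_eq_mul]
    _ = r * ∑ R ∈ S.powerset.filter (fun R => R.card = r), w R := by rw [Finset.mul_sum]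


lemma wstar_nonneg {n : ℕ} (r : ℕ) {w : Finset (Fin n) → ℝ} (hw0 : ∀ R, 0 ≤ w R) (S : Finset (Fin n)) :
    0 ≤ wstar r w S :=
  Finset.sum_nonneg fun R _ => hw0 R

lemma wstar_mono {n : ℕ} (r : ℕ) {w : Finset (Fin n) → ℝ} (hw0 : ∀ R, 0 ≤ w R)
    {S S' : Finset (Fin n)} (h : S ⊆ S') : wstar r w S ≤ wstar r w S' := by
  apply Finset.sum_le_sum_of_subset_of_nonneg
  · exact Finset.filter_subset_filter _ (Finset.powerset_mono.mpr h)
  · exact fun R _ _ => hw0 R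

lemma dW_nonneg {n : ℕ} (r : ℕ) {w : Finset (Fin n) → ℝ} (hw0 : ∀ R, 0 ≤ w R) (v : Fin n)
    (S : Finset (Fin n)) : 0 ≤ dW r w v S :=
  Finset.sum_nonneg fun R _ => hw0 R

lemma dW_mono {n : ℕ} (r : ℕ) {w : Finset (Fin n) → ℝ} (hw0 : ∀ R, 0 ≤ w R) (v : Fin n)
    {S S' : Finset (Fin n)} (h : S ⊆ S') : dW r w v S ≤ dW r w v S' := by
  apply Finset.sum_le_sum_of_subset_of_nonneg
  · exact Finset.filter_subset_filter _ (Finset.powerset_mono.mpr h)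
  · exact fun R _ _ => hw0 R


lemma quadlem (k : ℕ) (hk : 0 < k) (x e : Fin k → ℝ) (c : ℝ)
    (he0 : ∀ i, 0 ≤ e i) (hec : ∀ i, e i ≤ c) :
    ∑ i, (x i - e i - (∑ i', (x i' - e i')) / k) ^ 2 ≤
      (∑ i, (x i - (∑ i', x i') / k) ^ 2) - 2 * ∑ i, (x i - (∑ i', x i') / k) * e i
        + c * ∑ i, e i := by
  set X := ∑ i', x i' with hX
  set E := ∑ i', e i' with hE
  have hkR : (0:ℝ) < (k : ℝ) := by exact_mod_cast hk
  have hk0 : (k : ℝ) ≠ 0 := ne_of_gt hkR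
  have hXE : ∑ i', (x i' - e i') = X - E := by rw [Finset.sum_sub_distrib]
  have hsumA : ∑ i : Fin k, (x i - X / k) = 0 := by
    rw [Finset.sum_sub_distrib, Finset.sum_const, Finset.card_univ, Fintype.card_fin,
      nsmul_eq_mul]
    field_simp
    rw [hX]; ring
  have hpt : ∀ i, (x i - e i - (X - E) / k) ^ 2
      = (x i - X / k) ^ 2 - 2 * ((x i - X / k) * e i) + (e i) ^ 2
        + (E / k) ^ 2 + 2 * (E / k) * (x i - X / k) - 2 * (E / k) * e i := by
    intro i
    have h1 : (X - E) / k = X / k - E / k := by ring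
    rw [h1]; ring
  rw [hXE, Finset.sum_congr rfl (fun i _ => hpt i)]
  simp only [Finset.sum_add_distrib, Finset.sum_sub_distrib]
  have c1 : ∑ i : Fin k, 2 * ((x i - X / k) * e i) = 2 * ∑ i, (x i - X / k) * e i := by
    rw [Finset.mul_sum]
  have c2 : ∑ i : Fin k, 2 * (E / k) * (x i - X / k) = 2 * (E / k) * ∑ i, (x i - X / k) := by
    rw [Finset.mul_sum]
  have c3 : ∑ i : Fin k, 2 * (E / k) * e i = 2 * (E / k) * E := by
    rw [Finset.mul_sum, hE]
  have c4 : ∑ _i : Fin k, (E / k) ^ 2 = (k : ℝ) * (E / k) ^ 2 := by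
    rw [Finset.sum_const, Finset.card_univ, Fintype.card_fin, nsmul_eq_mul]
  rw [c1, c2, c3, c4, hsumA]
  have hE2 : (k : ℝ) * (E / k) ^ 2 - 2 * (E / k) * E = -(E ^ 2 / k) := by
    field_simp; ring
  have hEnn : 0 ≤ E := Finset.sum_nonneg fun i _ => he0 i
  have hsq : ∑ i, (e i) ^ 2 ≤ c * E := by
    rw [hE, Finset.mul_sum]
    refine Finset.sum_le_sum fun i _ => ?_
    nlinarith [hec i, he0 i]
  have hdiv : 0 ≤ E ^ 2 / k := div_nonneg (sq_nonneg E) (le_of_lt hkR)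
  nlinarith [hE2]

lemma Vfn_nonneg (k : ℕ) {n : ℕ} (r : ℕ) (w : Fin k → Finset (Fin n) → ℝ)
    (S : Finset (Fin n)) : 0 ≤ Vfn k r w S :=
  Finset.sum_nonneg fun i _ => sq_nonneg _

lemma step {k n : ℕ} (r : ℕ) (hk : 2 ≤ k) (hr : 1 ≤ r)
    (c : ℝ) (hc : 0 < c) (hc2 : c < 1/2)
    (w : Fin k → Finset (Fin n) → ℝ) (hw0 : ∀ i R, 0 ≤ w i R)
    (hw1 : ∀ i, wstar r (w i) Finset.univ = 1)
    (hdegc : ∀ i (v : Fin n), dW r (w i) v Finset.univ ≤ c)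
    (S : Finset (Fin n)) (hS : S.Nonempty)
    (hV : Vfn k r w S ≤ ((k : ℝ) - 1) * c) :
    ∃ v ∈ S, Vfn k r w (S.erase v) ≤ ((k : ℝ) - 1) * c := by
  have hkpos : 0 < k := by omega
  set T : ℝ := ((k : ℝ) - 1) * c with hT
  set x : Fin k → ℝ := fun i => wstar r (w i) S with hx
  set X : ℝ := ∑ i, x i with hX
  set A : ℝ := X / k with hA
  set e : Fin k → Fin n → ℝ := fun i v => dW r (w i) v S with he
  -- bounds on x
  have hx0 : ∀ i, 0 ≤ x i := fun i => wstar_nonneg r (hw0 i) S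
  have hx1 : ∀ i, x i ≤ 1 := fun i => (hw1 i) ▸ wstar_mono r (hw0 i) (Finset.subset_univ S)
  have he0 : ∀ i v, 0 ≤ e i v := fun i v => dW_nonneg r (hw0 i) v S
  have hec : ∀ i v, e i v ≤ c := fun i v =>
    le_trans (dW_mono r (hw0 i) v (Finset.subset_univ S)) (hdegc i v)
  have hsum_e : ∀ i, ∑ v ∈ S, e i v = r * x i := fun i => sum_dW r (w i) S
  -- x i ≤ c * |S| / r, in the form r * x i ≤ c * |S|
  have hxm : ∀ i, (r : ℝ) * x i ≤ c * S.card := by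
    intro i
    rw [← hsum_e i]
    calc ∑ v ∈ S, e i v ≤ ∑ _v ∈ S, c := Finset.sum_le_sum fun v _ => hec i v
      _ = S.card * c := by rw [Finset.sum_const, nsmul_eq_mul]
      _ = c * S.card := by ring
  -- per-vertex bound
  have hper : ∀ v ∈ S, Vfn k r w (S.erase v)
      ≤ Vfn k r w S - 2 * ∑ i, (x i - A) * e i v + c * ∑ i, e i v := by
    intro v _
    have hrw : ∀ i, wstar r (w i) (S.erase v) = x i - e i v := by
      intro i
      have := wstar_split r (w i) v S
      simp only [hx, he]
      linarith
    have : Vfn k r w (S.erase v) = ∑ i, (x i - e i v - (∑ i', (x i' - e i' v)) / k) ^ 2 := by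
      unfold Vfn
      exact Finset.sum_congr rfl fun i _ => by rw [hrw i, Finset.sum_congr rfl fun i' _ => hrw i']
    rw [this]
    exact quadlem k hkpos x (fun i => e i v) c (fun i => he0 i v) (fun i => hec i v)
  -- sum over v
  have hVsum : ∑ i, (x i - A) * x i = Vfn k r w S := by
    have h1 : ∑ i : Fin k, (x i - A) = 0 := by
      simp only [Finset.sum_sub_distrib, Finset.sum_const, Finset.card_univ, Fintype.card_fin,
        nsmul_eq_mul, hA]
      have : (k : ℝ) ≠ 0 := Nat.cast_ne_zero.mpr hkpos.ne'
      field_simp [hX]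
      rw [hX]; ring
    have h2 : ∑ i, (x i - A) * x i - ∑ i, (x i - A) ^ 2 = A * ∑ i : Fin k, (x i - A) := by
      rw [Finset.mul_sum, ← Finset.sum_sub_distrib]
      exact Finset.sum_congr rfl fun i _ => by ring
    have h3 : Vfn k r w S = ∑ i, (x i - A) ^ 2 := rfl
    rw [h3]
    rw [h1] at h2
    linarith
  have hbig : ∑ v ∈ S, Vfn k r w (S.erase v)
      ≤ ((S.card : ℝ) - 2 * r) * Vfn k r w S + c * r * X := by
    calc ∑ v ∈ S, Vfn k r w (S.erase v)
        ≤ ∑ v ∈ S, (Vfn k r w S - 2 * ∑ i, (x i - A) * e i v + c * ∑ i, e i v) :=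
          Finset.sum_le_sum hper
      _ = (S.card : ℝ) * Vfn k r w S - 2 * ∑ i, (x i - A) * (r * x i) + c * (r * X) := by
          rw [Finset.sum_add_distrib, Finset.sum_sub_distrib, Finset.sum_const, nsmul_eq_mul]
          congr 1
          · congr 1
            rw [← Finset.mul_sum, Finset.sum_comm]
            congr 1
            refine Finset.sum_congr rfl fun i _ => ?_
            rw [← Finset.mul_sum, hsum_e i]
          · rw [← Finset.mul_sum, Finset.sum_comm]
            congr 1
            rw [hX, Finset.mul_sum]
            exact Finset.sum_congr rfl fun i _ => hsum_e i
      _ = ((S.card : ℝ) - 2 * r) * Vfn k r w S + c * r * X := by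
          have : ∑ i, (x i - A) * (r * x i) = r * ∑ i, (x i - A) * x i := by
            rw [Finset.mul_sum]; exact Finset.sum_congr rfl fun i _ => by ring
          rw [this, hVsum]; ring
  -- the average is at most T
  have havg : ∑ v ∈ S, Vfn k r w (S.erase v) ≤ ∑ _v ∈ S, T := by
    rw [Finset.sum_const, nsmul_eq_mul]
    refine hbig.trans ?_
    have hm1 : (1 : ℝ) ≤ (S.card : ℝ) := by exact_mod_cast Finset.card_pos.mpr hS
    have hVnn : 0 ≤ Vfn k r w S := Vfn_nonneg k r w S
    have hX0 : 0 ≤ X := Finset.sum_nonneg fun i _ => hx0 i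
    have hkR : (2 : ℝ) ≤ (k : ℝ) := by exact_mod_cast hk
    have hrR : (1 : ℝ) ≤ (r : ℝ) := by exact_mod_cast hr
    by_cases hcase : 2 * (r : ℝ) ≤ (S.card : ℝ)
    · -- large set: use X ≤ k
      have hXk : X ≤ (k : ℝ) := by
        rw [hX]
        calc ∑ i, x i ≤ ∑ _i : Fin k, (1 : ℝ) := Finset.sum_le_sum fun i _ => hx1 i
          _ = (k : ℝ) := by simp
      have h2T : c * (k : ℝ) ≤ 2 * T := by rw [hT]; nlinarith
      nlinarith [mul_le_mul_of_nonneg_left hV (by linarith : (0:ℝ) ≤ (S.card : ℝ) - 2 * r),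
        mul_le_mul_of_nonneg_left hXk (show (0:ℝ) ≤ c * r by positivity),
        mul_le_mul_of_nonneg_left h2T (show (0:ℝ) ≤ (r:ℝ) by positivity)]
    · -- small set: use r * x i ≤ c * card
      push_neg at hcase
      have hrX : (r : ℝ) * X ≤ (k : ℝ) * (c * S.card) := by
        rw [hX, Finset.mul_sum]
        calc ∑ i, (r : ℝ) * x i ≤ ∑ _i : Fin k, c * (S.card : ℝ) :=
              Finset.sum_le_sum fun i _ => hxm i
          _ = (k : ℝ) * (c * S.card) := by rw [Finset.sum_const, Finset.card_univ,
              Fintype.card_fin, nsmul_eq_mul]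
      have hkc : (k : ℝ) * c ≤ (k : ℝ) - 1 := by nlinarith
      have h1 : ((S.card : ℝ) - 2 * r) * Vfn k r w S ≤ 0 :=
        mul_nonpos_of_nonpos_of_nonneg (by linarith) hVnn
      have h2 : c * ((r:ℝ) * X) ≤ c * ((k : ℝ) * (c * S.card)) :=
        mul_le_mul_of_nonneg_left hrX (le_of_lt hc)
      rw [hT]
      nlinarith [h1, h2, mul_le_mul_of_nonneg_left hkc
        (show (0:ℝ) ≤ c * (S.card : ℝ) by positivity)]
  obtain ⟨v, hv, hle⟩ := Finset.exists_le_of_sum_le hS havg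
  exact ⟨v, hv, hle⟩


-- gap lemma
lemma gap {k : ℕ} (hk : 2 ≤ k) {n : ℕ} (r : ℕ) (w : Fin k → Finset (Fin n) → ℝ)
    (S : Finset (Fin n)) (c : ℝ) (hc : 0 < c)
    (hV : Vfn k r w S ≤ ((k : ℝ) - 1) * c) (i₁ i₂ : Fin k) :
    |wstar r (w i₁) S - wstar r (w i₂) S| ≤ Real.sqrt (2 * ((k : ℝ) - 1) * c) := by
  by_cases hne : i₁ = i₂
  · subst hne; simp [Real.sqrt_nonneg]
  · set y : Fin k → ℝ := fun i => wstar r (w i) S with hy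
    set A : ℝ := (∑ i', y i') / k with hA
    have hVdef : Vfn k r w S = ∑ i, (y i - A) ^ 2 := rfl
    have hpair : (y i₁ - A) ^ 2 + (y i₂ - A) ^ 2 ≤ Vfn k r w S := by
      have h := Finset.sum_le_sum_of_subset_of_nonneg
        (Finset.subset_univ ({i₁, i₂} : Finset (Fin k)))
        (fun i _ _ => sq_nonneg (y i - A))
      rw [Finset.sum_pair hne] at h
      rw [hVdef]
      exact h
    apply Real.abs_le_sqrt
    nlinarith [sq_nonneg ((y i₁ - A) + (y i₂ - A))]

lemma chain {k n : ℕ} (r : ℕ) (hk : 2 ≤ k) (hr : 1 ≤ r)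
    (c : ℝ) (hc : 0 < c) (hc2 : c < 1/2)
    (w : Fin k → Finset (Fin n) → ℝ) (hw0 : ∀ i R, 0 ≤ w i R)
    (hw1 : ∀ i, wstar r (w i) Finset.univ = 1)
    (hdegc : ∀ i (v : Fin n), (∑ R ∈ Finset.univ.powerset.filter
      (fun R => R.card = r ∧ v ∈ R), w i R) ≤ c) :
    ∀ t, t ≤ n → ∃ g : ℕ → Finset (Fin n), g 0 = Finset.univ ∧
      (∀ i ≤ t, (g i).card = n - i ∧ Vfn k r w (g i) ≤ ((k : ℝ) - 1) * c) ∧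
      (∀ i < t, g (i+1) ⊆ g i) := by
  have hkpos : 0 < k := by omega
  have hVuniv : Vfn k r w (Finset.univ : Finset (Fin n)) = 0 := by
    unfold Vfn
    have : ∀ i : Fin k, wstar r (w i) (Finset.univ : Finset (Fin n)) = 1 := hw1
    rw [Finset.sum_congr rfl fun i _ => by rw [this i]]
    rw [Finset.sum_congr rfl fun i' (_ : i' ∈ Finset.univ) => this i']
    simp only [Finset.sum_const, Finset.card_univ, Fintype.card_fin, nsmul_eq_mul, mul_one]
    have : (k : ℝ) ≠ 0 := Nat.cast_ne_zero.mpr hkpos.ne'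
    rw [div_self this]
    simp
  have hT0 : (0 : ℝ) ≤ ((k : ℝ) - 1) * c := by
    have : (2 : ℝ) ≤ (k : ℝ) := by exact_mod_cast hk
    nlinarith
  intro t
  induction t with
  | zero =>
    intro _
    refine ⟨fun _ => Finset.univ, rfl, ?_, by omega⟩
    intro i hi
    interval_cases i
    refine ⟨by simp, by rw [hVuniv]; exact hT0⟩
  | succ t ih =>
    intro ht
    obtain ⟨g, hg0, hgood, hsub⟩ := ih (by omega)
    have hcard : (g t).card = n - t := (hgood t le_rfl).1
    have hVt : Vfn k r w (g t) ≤ ((k : ℝ) - 1) * c := (hgood t le_rfl).2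
    have hne : (g t).Nonempty := by
      rw [← Finset.card_pos, hcard]; omega
    obtain ⟨v, hv, hVe⟩ := step r hk hr c hc hc2 w hw0 hw1 hdegc (g t) hne hVt
    refine ⟨fun i => if i ≤ t then g i else (g t).erase v, by simp [hg0], ?_, ?_⟩
    · intro i hi
      by_cases hit : i ≤ t
      · simpa [hit] using hgood i hit
      · have : i = t + 1 := by omega
        subst this
        simp only [if_neg (by omega : ¬ t + 1 ≤ t)]
        constructor
        · rw [Finset.card_erase_of_mem hv, hcard]; omega
        · exact hVe
    · intro i hi
      by_cases hit : i < t
      · simp only [if_pos (by omega : i + 1 ≤ t), if_pos (by omega : i ≤ t)]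
        exact hsub i hit
      · have : i = t := by omega
        subst this
        simp only [if_neg (by omega : ¬ i + 1 ≤ i), if_pos le_rfl]
        exact Finset.erase_subset v (g i)


end Stmt3Aux

open Stmt3Aux in
theorem stmt3 (k n r : ℕ) (hk : 2 ≤ k) (hr : 1 ≤ r) (hrn : r ≤ n)
    (c : ℝ) (hc : 0 < c) (hc2 : c < 1/2)
    (w : Fin k → Finset (Fin n) → ℝ)
    (hw0 : ∀ i R, 0 ≤ w i R)
    (hw1 : ∀ i, ∑ R ∈ Finset.univ.powerset.filter (fun R => R.card = r), w i R = 1)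
    (hdeg : ∀ i, ∀ j : Fin n, 1 - c ≤ wstar r (w i) (Finset.univ.erase j)) :
    ∃ S : Fin n → Finset (Fin n),
      (∀ j, (S j).card = (j : ℕ) + 1) ∧ Monotone S ∧
      S ⟨n - 1, by omega⟩ = Finset.univ ∧
      ∀ (i₁ i₂ : Fin k) (j : Fin n),
        |wstar r (w i₁) (S j) - wstar r (w i₂) (S j)| ≤ Real.sqrt (2 * ((k : ℝ) - 1) * c) := by
  have hw1' : ∀ i, wstar r (w i) (Finset.univ : Finset (Fin n)) = 1 := fun i => hw1 i
  have hdegc : ∀ i (v : Fin n), (∑ R ∈ Finset.univ.powerset.filter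
      (fun R => R.card = r ∧ v ∈ R), w i R) ≤ c := by
    intro i v
    have hsplit := wstar_split r (w i) v (Finset.univ : Finset (Fin n))
    have h1 := hdeg i v
    have h2 : dW r (w i) v Finset.univ = ∑ R ∈ Finset.univ.powerset.filter
        (fun R => R.card = r ∧ v ∈ R), w i R := rfl
    rw [hw1' i] at hsplit
    linarith [hsplit, h2 ▸ hsplit]
  obtain ⟨g, hg0, hgood, hsub⟩ := chain r hk hr c hc hc2 w hw0 hw1' hdegc n le_rfl
  have hanti : ∀ a b : ℕ, a ≤ b → b ≤ n → g b ⊆ g a := by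
    intro a b hab hbn
    induction b, hab using Nat.le_induction with
    | base => exact subset_rfl
    | succ b hab ih =>
      exact (hsub b (by omega)).trans (ih (by omega))
  refine ⟨fun j => g (n - 1 - (j : ℕ)), ?_, ?_, ?_, ?_⟩
  · intro j
    have hj := j.isLt
    have := (hgood (n - 1 - (j : ℕ)) (by omega)).1
    rw [this]; omega
  · intro j j' hjj
    have hj := j.isLt
    have hj' := j'.isLt
    have hle : (j : ℕ) ≤ (j' : ℕ) := hjj
    exact hanti (n - 1 - (j' : ℕ)) (n - 1 - (j : ℕ)) (by omega) (by omega)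
  · show g (n - 1 - (n - 1)) = Finset.univ
    rw [Nat.sub_self]
    exact hg0
  · intro i₁ i₂ j
    have hj := j.isLt
    exact gap hk r w _ c hc (hgood (n - 1 - (j : ℕ)) (by omega)).2 i₁ i₂
end

section
/- Let G be a bipartite graph with bipartition (A, B) where B is partitioned into k ≥ 2 blocks B₁,…,B_k each of cardinality m ≥ 1, every vertex of B has the same degree r ≥ 1, and each vertex of A has at most cm neighbors in each Bᵢ, where c ∈ (0, 1/2). Then there is an ordering v₁,…,vₙ of A (n = |A|) such that, setting A_j = {v₁,…,v_j} and N(A_j, Bᵢ) the set of vertices of Bᵢ with a neighbor in A_j, we have | |N(A_j, B_{i₁})| − |N(A_j, B_{i₂})| | ≤ √(2(k−1)c) · m for all i₁, i₂ ∈ [k] and j ∈ [n]. -/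
open Finset
open scoped Classical

set_option linter.unusedSectionVars false
set_option linter.unusedVariables false

namespace Stmt4Aux

variable {α β : Type} [Fintype α] [Fintype β] {k : ℕ}

/-- the set of vertices of block `i` all of whose neighbors lie in the remaining set `R`. -/
noncomputable def US (E : α → β → Prop) (Bl : Fin k → Finset β) (R : Finset α) (i : Fin k) :
    Finset β :=
  (Bl i).filter (fun b => ∀ a, E a b → a ∈ R)

noncomputable def uu (E : α → β → Prop) (Bl : Fin k → Finset β) (R : Finset α) (i : Fin k) : ℝ :=
  ((US E Bl R i).card : ℝ)

noncomputable def SS (E : α → β → Prop) (Bl : Fin k → Finset β) (R : Finset α) : ℝ :=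
  ∑ i, uu E Bl R i

noncomputable def Psi (E : α → β → Prop) (Bl : Fin k → Finset β) (R : Finset α) : ℝ :=
  (∑ i, (uu E Bl R i) ^ 2) - (SS E Bl R) ^ 2 / k

variable (E : α → β → Prop) (Bl : Fin k → Finset β)

lemma US_erase (R : Finset α) (a : α) (ha : a ∈ R) (i : Fin k) :
    US E Bl (R.erase a) i = (US E Bl R i).filter (fun b => ¬ E a b) := by
  ext b
  simp only [US, Finset.mem_filter, Finset.mem_erase]
  constructor
  · rintro ⟨hb, h⟩
    refine ⟨⟨hb, fun a' ha' => ((h a' ha').2 : _)⟩, fun hab => ?_⟩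
    exact (h a hab).1 rfl
  · rintro ⟨⟨hb, h⟩, hab⟩
    exact ⟨hb, fun a' ha' => ⟨fun e => hab (e ▸ ha'), h a' ha'⟩⟩

lemma uu_nonneg (R : Finset α) (i : Fin k) : 0 ≤ uu E Bl R i := Nat.cast_nonneg _

lemma uu_erase (R : Finset α) (a : α) (ha : a ∈ R) (i : Fin k) :
    uu E Bl (R.erase a) i = uu E Bl R i - (((US E Bl R i).filter (fun b => E a b)).card : ℝ) := by
  rw [uu, US_erase E Bl R a ha i, eq_sub_iff_add_eq, uu]
  rw [← Nat.cast_add]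
  norm_cast
  have := Finset.card_filter_add_card_filter_not (s := US E Bl R i)
    (p := fun b => E a b)
  omega

/-- double counting : each uncovered vertex has all `r` of its neighbors in `R`. -/
lemma sum_delta {r : ℕ} (hdeg : ∀ b : β, (Finset.univ.filter (fun a => E a b)).card = r)
    (R : Finset α) (i : Fin k) :
    ∑ a ∈ R, (((US E Bl R i).filter (fun b => E a b)).card : ℝ) = r * uu E Bl R i := by
  rw [uu, ← Nat.cast_sum]
  have : ∑ a ∈ R, ((US E Bl R i).filter (fun b => E a b)).card
      = ∑ b ∈ US E Bl R i, (R.filter (fun a => E a b)).card := by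
    simp only [Finset.card_filter]
    exact Finset.sum_comm
  rw [this]
  have h2 : ∀ b ∈ US E Bl R i, (R.filter (fun a => E a b)).card = r := by
    intro b hb
    rw [← hdeg b]
    have : R.filter (fun a => E a b) = Finset.univ.filter (fun a => E a b) := by
      ext a'
      simp only [Finset.mem_filter, Finset.mem_univ, true_and]
      constructor
      · rintro ⟨_, h⟩; exact h
      · intro h
        simp only [US, Finset.mem_filter] at hb
        exact ⟨hb.2 a' h, h⟩
    rw [this]
  rw [Finset.sum_congr rfl h2, Finset.sum_const, smul_eq_mul]
  push_cast; ring


noncomputable def dd (E : α → β → Prop) (Bl : Fin k → Finset β) (R : Finset α) (a : α)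
    (i : Fin k) : ℝ :=
  (((US E Bl R i).filter (fun b => E a b)).card : ℝ)

lemma dd_nonneg (R : Finset α) (a : α) (i : Fin k) : 0 ≤ dd E Bl R a i := Nat.cast_nonneg _

lemma dd_le {c : ℝ} {m : ℕ}
    (hnbr : ∀ a : α, ∀ i, (((Bl i).filter (fun b => E a b)).card : ℝ) ≤ c * m)
    (R : Finset α) (a : α) (i : Fin k) : dd E Bl R a i ≤ c * m := by
  refine le_trans ?_ (hnbr a i)
  rw [dd]
  have hsub : US E Bl R i ⊆ Bl i := Finset.filter_subset _ _
  exact_mod_cast Finset.card_le_card (Finset.filter_subset_filter _ hsub)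

lemma sum_centered (hk0 : 0 < k) (u : Fin k → ℝ) :
    ∑ i, (u i - (∑ j, u j) / k) ^ 2 = ∑ i, (u i) ^ 2 - (∑ i, u i) ^ 2 / k := by
  have hkk : (k : ℝ) ≠ 0 := by positivity
  have h1 : ∑ i, (u i - (∑ j, u j) / k) ^ 2
      = ∑ i, ((u i) ^ 2 - 2 * ((∑ j, u j) / k) * u i + ((∑ j, u j) / k) ^ 2) := by
    apply Finset.sum_congr rfl; intro i _; ring
  rw [h1, Finset.sum_add_distrib, Finset.sum_sub_distrib, Finset.sum_const, ← Finset.mul_sum]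
  simp only [Finset.card_univ, Fintype.card_fin, nsmul_eq_mul]
  field_simp
  ring

lemma Psi_eq (hk0 : 0 < k) (R : Finset α) :
    Psi E Bl R = ∑ i, (uu E Bl R i - SS E Bl R / k) ^ 2 := by
  simp only [Psi, SS]
  exact (sum_centered hk0 _).symm

lemma Psi_nonneg (hk0 : 0 < k) (R : Finset α) : 0 ≤ Psi E Bl R := by
  rw [Psi_eq E Bl hk0 R]
  exact Finset.sum_nonneg fun i _ => sq_nonneg _

lemma spread (hk0 : 0 < k) (R : Finset α) (i₁ i₂ : Fin k) :
    (uu E Bl R i₁ - uu E Bl R i₂) ^ 2 ≤ 2 * Psi E Bl R := by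
  rcases eq_or_ne i₁ i₂ with rfl | hne
  · simpa using Psi_nonneg E Bl hk0 R
  · rw [Psi_eq E Bl hk0 R]
    have h : ∑ i ∈ ({i₁, i₂} : Finset (Fin k)), (uu E Bl R i - SS E Bl R / k) ^ 2
        ≤ ∑ i, (uu E Bl R i - SS E Bl R / k) ^ 2 :=
      Finset.sum_le_sum_of_subset_of_nonneg (by simp) (fun i _ _ => sq_nonneg _)
    rw [Finset.sum_pair hne] at h
    nlinarith [sq_nonneg (uu E Bl R i₁ + uu E Bl R i₂ - 2 * (SS E Bl R / k))]


lemma SS_erase (R : Finset α) (a : α) (ha : a ∈ R) :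
    SS E Bl (R.erase a) = SS E Bl R - ∑ i, dd E Bl R a i := by
  simp only [SS, uu_erase E Bl R a ha, dd]
  rw [Finset.sum_sub_distrib]

lemma Psi_erase_le (hk0 : 0 < k) {c : ℝ} {m : ℕ}
    (hnbr : ∀ a : α, ∀ i, (((Bl i).filter (fun b => E a b)).card : ℝ) ≤ c * m)
    (R : Finset α) (a : α) (ha : a ∈ R) :
    Psi E Bl (R.erase a) ≤ Psi E Bl R - 2 * ∑ i, uu E Bl R i * dd E Bl R a i
      + c * m * (∑ i, dd E Bl R a i)
      + 2 * SS E Bl R * (∑ i, dd E Bl R a i) / k := by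
  have hkk : (0 : ℝ) < k := by positivity
  have hu : ∀ i, uu E Bl (R.erase a) i = uu E Bl R i - dd E Bl R a i := fun i => by
    rw [uu_erase E Bl R a ha i]; rfl
  have h1 : ∑ i, uu E Bl (R.erase a) i ^ 2
      ≤ ∑ i, (uu E Bl R i ^ 2 - 2 * (uu E Bl R i * dd E Bl R a i) + c * m * dd E Bl R a i) := by
    apply Finset.sum_le_sum
    intro i _
    rw [hu i]
    have h0 := dd_nonneg E Bl R a i
    have h1 := dd_le E Bl hnbr R a i
    nlinarith
  rw [Finset.sum_add_distrib, Finset.sum_sub_distrib, ← Finset.mul_sum, ← Finset.mul_sum] at h1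
  have h2 : (SS E Bl R) ^ 2 - 2 * SS E Bl R * (∑ i, dd E Bl R a i)
      ≤ (SS E Bl R - ∑ i, dd E Bl R a i) ^ 2 := by nlinarith [sq_nonneg (∑ i, dd E Bl R a i)]
  have h3 : ((SS E Bl R) ^ 2 - 2 * SS E Bl R * (∑ i, dd E Bl R a i)) / k
      ≤ (SS E Bl R - ∑ i, dd E Bl R a i) ^ 2 / k := by
    exact div_le_div_of_nonneg_right h2 hkk.le
  rw [sub_div] at h3
  have hps : Psi E Bl (R.erase a) = (∑ i, uu E Bl (R.erase a) i ^ 2)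
      - (SS E Bl R - ∑ i, dd E Bl R a i) ^ 2 / k := by
    rw [Psi, SS_erase E Bl R a ha]
  rw [hps, Psi]
  have h4 : 2 * SS E Bl R * (∑ i, dd E Bl R a i) / k
      = 2 * SS E Bl R * (∑ i, dd E Bl R a i) / k := rfl
  linarith [h1, h3]

lemma sum_step (hk0 : 0 < k) {r m : ℕ} {c : ℝ}
    (hdeg : ∀ b : β, (Finset.univ.filter (fun a => E a b)).card = r)
    (hnbr : ∀ a : α, ∀ i, (((Bl i).filter (fun b => E a b)).card : ℝ) ≤ c * m)
    (R : Finset α) (hR : R.Nonempty) :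
    ∃ a ∈ R, Psi E Bl (R.erase a)
      ≤ Psi E Bl R + ((r : ℝ) / R.card) * (c * m * SS E Bl R - 2 * Psi E Bl R) := by
  apply Finset.exists_le_of_sum_le hR
  have hcard : (0 : ℝ) < R.card := by
    exact_mod_cast Finset.card_pos.mpr hR
  have hsumdd : ∀ i, ∑ a ∈ R, dd E Bl R a i = r * uu E Bl R i := fun i => by
    simpa [dd] using sum_delta E Bl hdeg R i
  calc ∑ a ∈ R, Psi E Bl (R.erase a)
      ≤ ∑ a ∈ R, (Psi E Bl R - 2 * ∑ i, uu E Bl R i * dd E Bl R a i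
          + c * m * (∑ i, dd E Bl R a i)
          + 2 * SS E Bl R * (∑ i, dd E Bl R a i) / k) :=
        Finset.sum_le_sum fun a ha => Psi_erase_le E Bl hk0 hnbr R a ha
    _ = ∑ a ∈ R, (Psi E Bl R + ((r : ℝ) / R.card) * (c * m * SS E Bl R - 2 * Psi E Bl R)) := by
        have hA : ∑ a ∈ R, ∑ i, uu E Bl R i * dd E Bl R a i
            = (r : ℝ) * ∑ i, uu E Bl R i ^ 2 := by
          rw [Finset.sum_comm, Finset.mul_sum]
          apply Finset.sum_congr rfl
          intro i _
          rw [← Finset.mul_sum, hsumdd i]; ring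
        have hB : ∑ a ∈ R, ∑ i, dd E Bl R a i = (r : ℝ) * SS E Bl R := by
          rw [Finset.sum_comm, SS, Finset.mul_sum]
          exact Finset.sum_congr rfl fun i _ => hsumdd i
        have e1 : ∑ a ∈ R, (Psi E Bl R - 2 * ∑ i, uu E Bl R i * dd E Bl R a i
              + c * m * (∑ i, dd E Bl R a i)
              + 2 * SS E Bl R * (∑ i, dd E Bl R a i) / k)
            = R.card * Psi E Bl R - 2 * ((r : ℝ) * ∑ i, uu E Bl R i ^ 2)
              + c * m * ((r : ℝ) * SS E Bl R)
              + 2 * SS E Bl R * ((r : ℝ) * SS E Bl R) * ((k : ℝ))⁻¹ := by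
          simp only [div_eq_mul_inv]
          rw [Finset.sum_add_distrib, Finset.sum_add_distrib, Finset.sum_sub_distrib,
            Finset.sum_const, nsmul_eq_mul, ← Finset.mul_sum, hA, ← Finset.mul_sum, hB,
            ← Finset.sum_mul, ← Finset.mul_sum, hB]
        rw [e1, Finset.sum_const, nsmul_eq_mul, Psi]
        have hcne : (R.card : ℝ) ≠ 0 := ne_of_gt hcard
        have hkne : (k : ℝ) ≠ 0 := by positivity
        field_simp
        ring


lemma uu_le {m : ℕ} (hcard : ∀ i, (Bl i).card = m) (R : Finset α) (i : Fin k) :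
    uu E Bl R i ≤ m := by
  rw [uu, ← hcard i]
  exact_mod_cast Finset.card_le_card (Finset.filter_subset _ _)

lemma SS_nonneg (R : Finset α) : 0 ≤ SS E Bl R :=
  Finset.sum_nonneg fun i _ => uu_nonneg E Bl R i

lemma SS_le {m : ℕ} (hcard : ∀ i, (Bl i).card = m) (R : Finset α) :
    SS E Bl R ≤ k * m := by
  rw [SS]
  calc ∑ i, uu E Bl R i ≤ ∑ _i : Fin k, (m : ℝ) :=
        Finset.sum_le_sum fun i _ => uu_le E Bl hcard R i
    _ = k * m := by simp [mul_comm]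

/-- `r * uu i ≤ |R| * c * m`, hence `r * SS ≤ |R| * (k * (c * m))`. -/
lemma rSS_le {r m : ℕ} {c : ℝ}
    (hdeg : ∀ b : β, (Finset.univ.filter (fun a => E a b)).card = r)
    (hnbr : ∀ a : α, ∀ i, (((Bl i).filter (fun b => E a b)).card : ℝ) ≤ c * m)
    (R : Finset α) :
    (r : ℝ) * SS E Bl R ≤ R.card * (k * (c * m)) := by
  rw [SS, Finset.mul_sum]
  have h : ∀ i : Fin k, (r : ℝ) * uu E Bl R i ≤ R.card * (c * m) := by
    intro i
    rw [← sum_delta E Bl hdeg R i]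
    calc ∑ a ∈ R, (((US E Bl R i).filter (fun b => E a b)).card : ℝ)
        ≤ ∑ _a ∈ R, c * m := Finset.sum_le_sum fun a _ => dd_le E Bl hnbr R a i
      _ = R.card * (c * m) := by rw [Finset.sum_const, nsmul_eq_mul]
  calc ∑ i, (r : ℝ) * uu E Bl R i ≤ ∑ _i : Fin k, (R.card : ℝ) * (c * m) :=
        Finset.sum_le_sum fun i _ => h i
    _ = R.card * (k * (c * m)) := by simp; ring

lemma invariant_step {r m : ℕ} {c : ℝ} (hk : 2 ≤ k) (hm : 1 ≤ m) (hc : 0 < c) (hc2 : c < 1/2)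
    (hcard : ∀ i, (Bl i).card = m)
    (hdeg : ∀ b : β, (Finset.univ.filter (fun a => E a b)).card = r)
    (hnbr : ∀ a : α, ∀ i, (((Bl i).filter (fun b => E a b)).card : ℝ) ≤ c * m)
    (R : Finset α) (hR : R.Nonempty)
    (hPsi : Psi E Bl R ≤ c * k * m ^ 2 / 2) :
    ∃ a ∈ R, Psi E Bl (R.erase a) ≤ c * k * m ^ 2 / 2 := by
  have hk0 : 0 < k := by omega
  obtain ⟨a, ha, hle⟩ := sum_step E Bl hk0 hdeg hnbr R hR
  refine ⟨a, ha, ?_⟩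
  have hP0 : 0 ≤ Psi E Bl R := Psi_nonneg E Bl hk0 R
  have hS0 : 0 ≤ SS E Bl R := SS_nonneg E Bl R
  have hSle : SS E Bl R ≤ k * m := SS_le E Bl hcard R
  have hrS : (r : ℝ) * SS E Bl R ≤ R.card * (k * (c * m)) := rSS_le E Bl hdeg hnbr R
  have hcR : (0 : ℝ) < R.card := by exact_mod_cast Finset.card_pos.mpr hR
  have hkR : (1 : ℝ) ≤ k := by exact_mod_cast hk0
  have hmR : (1 : ℝ) ≤ m := by exact_mod_cast hm
  set P := Psi E Bl R
  set S := SS E Bl R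
  set q := (r : ℝ) / R.card with hq
  have hq0 : 0 ≤ q := by positivity
  have hqS : q * S ≤ k * (c * m) := by
    rw [hq, div_mul_eq_mul_div, div_le_iff₀ hcR]
    calc (r : ℝ) * S ≤ R.card * (k * (c * m)) := hrS
      _ = k * (c * m) * R.card := by ring
  rcases le_or_gt (c * m * S) (2 * P) with hcase | hcase
  · have : q * (c * m * S - 2 * P) ≤ 0 :=
      mul_nonpos_of_nonneg_of_nonpos hq0 (by linarith)
    linarith
  · rcases le_or_gt (2 * q) 1 with hq1 | hq1
    · have h1 : P + q * (c * m * S - 2 * P) = P * (1 - 2 * q) + q * (c * m * S) := by ring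
      have h2 : P * (1 - 2 * q) ≤ (c * m * S / 2) * (1 - 2 * q) := by
        apply mul_le_mul_of_nonneg_right (by linarith) (by linarith)
      have h3 : (c * m * S / 2) * (1 - 2 * q) + q * (c * m * S) = c * m * S / 2 := by ring
      have h4 : c * m * S / 2 ≤ c * m * (k * m) / 2 := by
        have : c * m * S ≤ c * m * (k * m) := by
          apply mul_le_mul_of_nonneg_left hSle (by positivity)
        linarith
      have h5 : c * m * (k * m) / 2 = c * k * m ^ 2 / 2 := by ring
      linarith
    · have h1 : P * (1 - 2 * q) ≤ 0 :=
        mul_nonpos_of_nonneg_of_nonpos hP0 (by linarith)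
      have h2 : q * (c * m * S) = c * m * (q * S) := by ring
      have h3 : c * m * (q * S) ≤ c * m * (k * (c * m)) := by
        apply mul_le_mul_of_nonneg_left hqS (by positivity)
      have h4 : c * m * (k * (c * m)) ≤ c * k * m ^ 2 / 2 := by nlinarith
      have h5 : P + q * (c * m * S - 2 * P) = P * (1 - 2 * q) + q * (c * m * S) := by ring
      linarith

lemma build (B : ℝ)
    (hstep : ∀ R : Finset α, R.Nonempty → Psi E Bl R ≤ B →
      ∃ a ∈ R, Psi E Bl (R.erase a) ≤ B) :
    ∀ R : Finset α, Psi E Bl R ≤ B → ∃ l : List α, l.Nodup ∧ l.toFinset = R ∧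
      ∀ j, Psi E Bl ((l.drop j).toFinset) ≤ B := by
  intro R
  induction R using Finset.strongInduction with
  | _ R ih =>
    intro hR
    rcases R.eq_empty_or_nonempty with rfl | hne
    · exact ⟨[], by simp, by simp, fun j => by simpa using hR⟩
    · obtain ⟨a, ha, hPa⟩ := hstep R hne hR
      obtain ⟨l, hnd, htf, hdrop⟩ := ih (R.erase a) (Finset.erase_ssubset ha) hPa
      refine ⟨a :: l, ?_, ?_, ?_⟩
      · rw [List.nodup_cons]
        refine ⟨fun h => ?_, hnd⟩
        rw [← List.mem_toFinset, htf] at h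
        exact Finset.notMem_erase a R h
      · rw [List.toFinset_cons, htf, Finset.insert_erase ha]
      · intro j
        cases j with
        | zero =>
          simpa [List.toFinset_cons, htf, Finset.insert_erase ha] using hR
        | succ j => simpa using hdrop j

end Stmt4Aux

theorem stmt4 (k m r n : ℕ) (hk : 2 ≤ k) (hm : 1 ≤ m) (hr : 1 ≤ r)
    (c : ℝ) (hc : 0 < c) (hc2 : c < 1/2)
    (α β : Type) [Fintype α] [Fintype β]
    (E : α → β → Prop)
    (Bl : Fin k → Finset β)
    (hdisj : ∀ i₁ i₂, i₁ ≠ i₂ → Disjoint (Bl i₁) (Bl i₂))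
    (hcover : ∀ b : β, ∃ i, b ∈ Bl i)
    (hcard : ∀ i, (Bl i).card = m)
    (hdeg : ∀ b : β, (Finset.univ.filter (fun a => E a b)).card = r)
    (hnbr : ∀ a : α, ∀ i, (((Bl i).filter (fun b => E a b)).card : ℝ) ≤ c * m)
    (hn : n = Fintype.card α) :
    ∃ v : Fin n ≃ α, ∀ (j : Fin n) (i₁ i₂ : Fin k),
      |(((Bl i₁).filter (fun b => ∃ t, t ≤ j ∧ E (v t) b)).card : ℝ)
        - (((Bl i₂).filter (fun b => ∃ t, t ≤ j ∧ E (v t) b)).card : ℝ)|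
        ≤ Real.sqrt (2 * ((k : ℝ) - 1) * c) * m := by
  classical
  have hk0 : 0 < k := by omega
  set B : ℝ := c * k * m ^ 2 / 2 with hB
  -- the full vertex set satisfies the invariant
  have hUSuniv : ∀ i, Stmt4Aux.US E Bl Finset.univ i = Bl i := by
    intro i
    apply Finset.filter_true_of_mem
    intro b _
    exact fun a _ => Finset.mem_univ a
  have hu : ∀ i, Stmt4Aux.uu E Bl Finset.univ i = m := fun i => by
    rw [Stmt4Aux.uu, hUSuniv i, hcard i]
  have hSuniv : Stmt4Aux.SS E Bl Finset.univ = k * m := by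
    rw [Stmt4Aux.SS]
    simp [hu, mul_comm]
  have hPsiuniv : Stmt4Aux.Psi E Bl Finset.univ = 0 := by
    rw [Stmt4Aux.Psi, hSuniv]
    simp only [hu]
    rw [Finset.sum_const, Finset.card_univ, Fintype.card_fin, nsmul_eq_mul]
    have : (k : ℝ) ≠ 0 := by positivity
    field_simp
    ring
  have h0 : Stmt4Aux.Psi E Bl Finset.univ ≤ B := by
    rw [hPsiuniv, hB]; positivity
  -- build the ordering (as a list) maintaining the invariant
  obtain ⟨l, hnd, htf, hdrop⟩ := Stmt4Aux.build E Bl B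
    (fun R hne hR => Stmt4Aux.invariant_step E Bl hk hm hc hc2 hcard hdeg hnbr R hne hR)
    Finset.univ h0
  have hall : ∀ a : α, a ∈ l := fun a => by
    rw [← List.mem_toFinset, htf]; exact Finset.mem_univ a
  have hlen : l.length = n := by
    rw [← List.toFinset_card_of_nodup hnd, htf, Finset.card_univ, hn]
  let e0 : Fin l.length ≃ α := List.Nodup.getEquivOfForallMemList l hnd hall
  refine ⟨(finCongr hlen).symm.trans e0, ?_⟩
  set v : Fin n ≃ α := (finCongr hlen).symm.trans e0 with hvdef
  have hv : ∀ t : Fin n, v t = l.get ⟨t.val, by rw [hlen]; exact t.2⟩ := by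
    intro t
    simp [hvdef, e0, Equiv.trans_apply, finCongr, Fin.cast]
  intro j i₁ i₂
  set Rj : Finset α := (l.drop (j.val + 1)).toFinset with hRj
  -- the covered part of block i is the complement of `US Rj i` inside `Bl i`
  have hiff : ∀ b : β, (∃ t, t ≤ j ∧ E (v t) b) ↔ ¬ (∀ a, E a b → a ∈ Rj) := by
    intro b
    constructor
    · rintro ⟨t, htj, hE⟩
      intro hforall
      have hvt := hforall (v t) hE
      rw [hRj, List.mem_toFinset] at hvt
      have htake : v t ∈ l.take (j.val + 1) := by
        rw [hv t]
        have h1 : t.val < j.val + 1 := Nat.lt_succ_of_le htj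
        have h2 : t.val < (l.take (j.val + 1)).length := by
          rw [List.length_take]
          exact lt_min h1 (by rw [hlen]; exact t.2)
        rw [List.get_eq_getElem, ← List.getElem_take (xs := l) (h := h2)]
        exact List.getElem_mem h2
      exact List.disjoint_take_drop hnd le_rfl htake hvt
    · intro hforall
      push_neg at hforall
      obtain ⟨a, hE, haR⟩ := hforall
      obtain ⟨idx, hidx, hget⟩ := List.mem_iff_getElem.1 (hall a)
      have hidxn : idx < n := by rw [← hlen]; exact hidx
      by_cases hcase : idx < j.val + 1
      · refine ⟨⟨idx, hidxn⟩, ?_, ?_⟩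
        · exact Nat.lt_succ_iff.mp hcase
        · rw [hv, List.get_eq_getElem]
          simpa using hget ▸ hE
      · exfalso
        apply haR
        rw [hRj, List.mem_toFinset]
        push_neg at hcase
        obtain ⟨d, rfl⟩ : ∃ d, idx = j.val + 1 + d := ⟨idx - (j.val + 1), by omega⟩
        have hEq := List.getElem_drop' (xs := l) (i := j.val + 1) (j := d) hidx
        rw [← hget, hEq]
        exact List.getElem_mem _
  have hcardEq : ∀ i : Fin k,
      (((Bl i).filter (fun b => ∃ t, t ≤ j ∧ E (v t) b)).card : ℝ)
        = m - Stmt4Aux.uu E Bl Rj i := by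
    intro i
    have hfilt : (Bl i).filter (fun b => ∃ t, t ≤ j ∧ E (v t) b)
        = (Bl i).filter (fun b => ¬ (∀ a, E a b → a ∈ Rj)) := by
      apply Finset.filter_congr
      intro b _
      exact hiff b
    have hsum : (Stmt4Aux.US E Bl Rj i).card
        + ((Bl i).filter (fun b => ¬ (∀ a, E a b → a ∈ Rj))).card = m := by
      rw [← hcard i, Stmt4Aux.US]
      exact Finset.card_filter_add_card_filter_not _
    rw [hfilt, Stmt4Aux.uu]
    have := hsum
    push_cast [← this]
    ring
  rw [hcardEq i₁, hcardEq i₂]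
  have hPsiRj : Stmt4Aux.Psi E Bl Rj ≤ B := hdrop (j.val + 1)
  have hspread := Stmt4Aux.spread E Bl hk0 Rj i₂ i₁
  have hkR : (2 : ℝ) ≤ k := by exact_mod_cast hk
  have hsq : (Stmt4Aux.uu E Bl Rj i₂ - Stmt4Aux.uu E Bl Rj i₁) ^ 2
      ≤ 2 * ((k : ℝ) - 1) * c * m ^ 2 := by
    have h1 : 2 * Stmt4Aux.Psi E Bl Rj ≤ c * k * m ^ 2 := by
      rw [hB] at hPsiRj; linarith
    have h2 : c * k * m ^ 2 ≤ 2 * ((k : ℝ) - 1) * c * m ^ 2 := by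
      have hm2 : (0 : ℝ) ≤ (m : ℝ) ^ 2 := by positivity
      nlinarith
    linarith
  have habs : |(m : ℝ) - Stmt4Aux.uu E Bl Rj i₁ - ((m : ℝ) - Stmt4Aux.uu E Bl Rj i₂)|
      = |Stmt4Aux.uu E Bl Rj i₂ - Stmt4Aux.uu E Bl Rj i₁| := by
    congr 1; ring
  rw [habs, ← Real.sqrt_sq_eq_abs]
  have hfin : Real.sqrt ((Stmt4Aux.uu E Bl Rj i₂ - Stmt4Aux.uu E Bl Rj i₁) ^ 2)
      ≤ Real.sqrt (2 * ((k : ℝ) - 1) * c * m ^ 2) := Real.sqrt_le_sqrt hsq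
  have heq : Real.sqrt (2 * ((k : ℝ) - 1) * c * m ^ 2)
      = Real.sqrt (2 * ((k : ℝ) - 1) * c) * m := by
    rw [Real.sqrt_mul (by nlinarith : (0:ℝ) ≤ 2 * ((k : ℝ) - 1) * c)]
    rw [Real.sqrt_sq (by positivity : (0:ℝ) ≤ (m:ℝ))]
  rw [← heq]
  exact hfin
end

section
/- Steinitz's lemma in the ∞-norm: Let k ≥ 1 and let V be a finite multiset of vectors in ℝ^k with ‖v‖_∞ ≤ 1 for every v ∈ V and Σ_{v∈V} v = 0. Then there is an ordering v₁,…,vₙ of V such that ‖v₁ + v₂ + ⋯ + v_j‖_∞ ≤ k for every j ∈ [n]. -/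
open Finset

/-- Key step: if weights with sum `n - k` exist, then weights with sum `n - 1 - k` exist
with some weight equal to zero.  Proved via an extreme point of the corresponding polytope. -/
private lemma steinitz_step (k n : ℕ) (hkn : k < n) (v : Fin n → (Fin k → ℝ))
    (lam : Fin n → ℝ) (h01 : ∀ i, lam i ∈ Set.Icc (0:ℝ) 1)
    (hsum : ∑ i, lam i = (n : ℝ) - k) (hvs : ∑ i, lam i • v i = 0) :
    ∃ μ : Fin n → ℝ, (∀ i, μ i ∈ Set.Icc (0:ℝ) 1) ∧ (∑ i, μ i = (n : ℝ) - 1 - k) ∧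
      (∑ i, μ i • v i = 0) ∧ ∃ i, μ i = 0 := by
  classical
  set S : Set (Fin n → ℝ) :=
    {μ | (∀ i, μ i ∈ Set.Icc (0:ℝ) 1) ∧ (∑ i, μ i = (n:ℝ) - 1 - k) ∧ (∑ i, μ i • v i = 0)}
    with hS
  have hkn' : (k : ℝ) < n := by exact_mod_cast hkn
  have hkn1 : (k : ℝ) + 1 ≤ n := by exact_mod_cast hkn
  have hnk : (0:ℝ) < (n:ℝ) - k := by linarith
  have hnk1 : (0:ℝ) ≤ (n:ℝ) - 1 - k := by linarith
  -- S is nonempty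
  set c : ℝ := ((n:ℝ) - 1 - k) / ((n:ℝ) - k) with hc
  have hc0 : 0 ≤ c := div_nonneg hnk1 hnk.le
  have hc1 : c ≤ 1 := by rw [div_le_one hnk]; linarith
  have hmem : (fun i => c * lam i) ∈ S := by
    refine ⟨fun i => ?_, ?_, ?_⟩
    · have h := h01 i
      simp only [Set.mem_Icc] at h ⊢
      exact ⟨mul_nonneg hc0 h.1, by nlinarith⟩
    · rw [← Finset.mul_sum, hsum, hc, div_mul_cancel₀ _ hnk.ne']
    · have h : ∀ i, (c * lam i) • v i = c • (lam i • v i) := fun i => by rw [smul_smul]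
      simp_rw [h, ← Finset.smul_sum, hvs, smul_zero]
  -- S is closed
  have hclosed : IsClosed S := by
    have h1 : IsClosed {μ : Fin n → ℝ | ∀ i, μ i ∈ Set.Icc (0:ℝ) 1} := by
      have he : {μ : Fin n → ℝ | ∀ i, μ i ∈ Set.Icc (0:ℝ) 1}
          = ⋂ i, (fun μ : Fin n → ℝ => μ i) ⁻¹' Set.Icc (0:ℝ) 1 := by
        ext μ; simp
      rw [he]
      exact isClosed_iInter fun i => isClosed_Icc.preimage (continuous_apply i)
    have h2 : IsClosed {μ : Fin n → ℝ | ∑ i, μ i = (n:ℝ) - 1 - k} :=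
      isClosed_eq (continuous_finset_sum _ fun i _ => continuous_apply i) continuous_const
    have h3 : IsClosed {μ : Fin n → ℝ | ∑ i, μ i • v i = 0} :=
      isClosed_eq (continuous_finset_sum _ fun i _ => (continuous_apply i).smul continuous_const)
        continuous_const
    have he : S = {μ : Fin n → ℝ | ∀ i, μ i ∈ Set.Icc (0:ℝ) 1}
        ∩ ({μ : Fin n → ℝ | ∑ i, μ i = (n:ℝ) - 1 - k}
          ∩ {μ : Fin n → ℝ | ∑ i, μ i • v i = 0}) := rfl
    rw [he]; exact h1.inter (h2.inter h3)
  -- S is bounded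
  have hbdd : Bornology.IsBounded S := by
    refine (Metric.isBounded_closedBall (x := (0 : Fin n → ℝ)) (r := 1)).subset ?_
    intro μ hμ
    rw [Metric.mem_closedBall, dist_zero_right]
    rw [pi_norm_le_iff_of_nonneg zero_le_one]
    intro i
    obtain ⟨h1, h2⟩ := hμ.1 i
    rw [Real.norm_eq_abs, abs_le]; constructor <;> linarith
  have hcomp : IsCompact S := Metric.isCompact_of_isClosed_isBounded hclosed hbdd
  -- extreme point
  obtain ⟨μ, hμext⟩ := hcomp.extremePoints_nonempty ⟨_, hmem⟩
  rw [mem_extremePoints] at hμext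
  obtain ⟨hμS, hext⟩ := hμext
  obtain ⟨hμ01, hμsum, hμvs⟩ := hμS
  refine ⟨μ, hμ01, hμsum, hμvs, ?_⟩
  by_contra hno
  push_neg at hno
  have hpos : ∀ i, 0 < μ i := fun i => lt_of_le_of_ne (hμ01 i).1 (Ne.symm (hno i))
  set F : Finset (Fin n) := Finset.univ.filter (fun i => μ i < 1) with hF
  -- Claim: F.card ≤ k + 1
  have hcard : F.card ≤ k + 1 := by
    by_contra hbig
    push_neg at hbig
    have hnotli : ¬ LinearIndependent ℝ (fun i : F => ((v i : Fin k → ℝ), (1:ℝ))) := by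
      intro hli
      have hle := hli.fintype_card_le_finrank
      have hfr : Module.finrank ℝ ((Fin k → ℝ) × ℝ) = k + 1 := by
        rw [Module.finrank_prod, Module.finrank_fin_fun, Module.finrank_self]
      rw [hfr, Fintype.card_coe] at hle
      omega
    obtain ⟨g, hg0, i₀, hgi₀⟩ := Fintype.not_linearIndependent_iff.mp hnotli
    set d : Fin n → ℝ := fun i => if h : i ∈ F then g ⟨i, h⟩ else 0 with hd
    have hdF : ∀ i ∉ F, d i = 0 := fun i hi => by simp [hd, hi]
    have hdmem : ∀ i : F, d (i : Fin n) = g i := fun i => by simp [hd, i.2]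
    -- component identities
    have hgfst : ∑ i : F, g i • v (i : Fin n) = 0 := by
      have h := congrArg Prod.fst hg0
      simpa [Prod.fst_sum] using h
    have hgsnd : ∑ i : F, g i = 0 := by
      have h := congrArg Prod.snd hg0
      simpa [Prod.snd_sum] using h
    have hdv : ∑ i, d i • v i = 0 := by
      have e1 : ∑ i, d i • v i = ∑ i ∈ F, d i • v i :=
        (Finset.sum_subset (Finset.subset_univ F)
          (fun i _ hi => by rw [hdF i hi, zero_smul])).symm
      have e2 : ∑ i ∈ F, d i • v i = ∑ i : F, d (i : Fin n) • v (i : Fin n) :=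
        (Finset.sum_coe_sort F _).symm
      rw [e1, e2, ← hgfst]
      exact Finset.sum_congr rfl fun i _ => by rw [hdmem i]
    have hdsum : ∑ i, d i = 0 := by
      have e1 : ∑ i, d i = ∑ i ∈ F, d i :=
        (Finset.sum_subset (Finset.subset_univ F) (fun i _ hi => hdF i hi)).symm
      have e2 : ∑ i ∈ F, d i = ∑ i : F, d (i : Fin n) := (Finset.sum_coe_sort F _).symm
      rw [e1, e2, ← hgsnd]
      exact Finset.sum_congr rfl fun i _ => hdmem i
    -- choose epsilon
    have hFne : F.Nonempty := ⟨i₀, i₀.2⟩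
    set δ : ℝ := F.inf' hFne (fun i => min (μ i) (1 - μ i)) with hδ
    have hδpos : 0 < δ := by
      rw [hδ, Finset.lt_inf'_iff]
      intro i hi
      have hi1 : μ i < 1 := by simpa [hF] using hi
      exact lt_min (hpos i) (by linarith)
    set M : ℝ := 1 + ∑ i, |d i| with hM
    have hMpos : 0 < M := by
      have h : (0:ℝ) ≤ ∑ i, |d i| := Finset.sum_nonneg fun i _ => abs_nonneg _
      simp only [hM]; linarith
    set ε : ℝ := δ / M with hε
    have hεpos : 0 < ε := div_pos hδpos hMpos
    have hkey : ∀ i, |ε * d i| < δ := by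
      intro i
      have h1 : |d i| ≤ ∑ j, |d j| := Finset.single_le_sum (fun j _ => abs_nonneg (d j))
        (Finset.mem_univ i)
      have h2 : |ε * d i| = ε * |d i| := by rw [abs_mul, abs_of_pos hεpos]
      rw [h2, hε]
      calc δ / M * |d i| ≤ δ / M * (M - 1) := by
            apply mul_le_mul_of_nonneg_left _ (div_nonneg hδpos.le hMpos.le)
            simp only [hM]; linarith
        _ < δ / M * M := by
            apply mul_lt_mul_of_pos_left _ (div_pos hδpos hMpos)
            linarith
        _ = δ := div_mul_cancel₀ _ hMpos.ne'
    have hδle : ∀ i ∈ F, δ ≤ min (μ i) (1 - μ i) := fun i hi => Finset.inf'_le _ hi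
    -- the two perturbed points
    have hmemS : ∀ (s : ℝ), |s| = 1 → (fun i => μ i + s * (ε * d i)) ∈ S := by
      intro s hs
      refine ⟨fun i => ?_, ?_, ?_⟩
      · simp only [Set.mem_Icc]
        by_cases hiF : i ∈ F
        · have h1 := hδle i hiF
          have h2 : |s * (ε * d i)| < min (μ i) (1 - μ i) := by
            rw [abs_mul, hs, one_mul]
            exact lt_of_lt_of_le (hkey i) h1
          rw [abs_lt] at h2
          have hl := min_le_left (μ i) (1 - μ i)
          have hr := min_le_right (μ i) (1 - μ i)
          constructor
          · nlinarith [h2.1, hpos i]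
          · nlinarith [h2.2]
        · rw [hdF i hiF, mul_zero, mul_zero, add_zero]
          exact Set.mem_Icc.mp (hμ01 i)
      · rw [Finset.sum_add_distrib, hμsum]
        have h : ∑ i, s * (ε * d i) = (s * ε) * ∑ i, d i := by
          rw [Finset.mul_sum]
          exact Finset.sum_congr rfl fun i _ => by ring
        rw [h, hdsum, mul_zero, add_zero]
      · have h : ∀ i, (μ i + s * (ε * d i)) • v i = μ i • v i + (s * ε) • (d i • v i) := by
          intro i
          rw [add_smul, smul_smul]
          ring_nf
        simp_rw [h]
        rw [Finset.sum_add_distrib, hμvs, ← Finset.smul_sum, hdv, smul_zero, add_zero]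
    have hx₁ := hmemS 1 (by norm_num)
    have hx₂ := hmemS (-1) (by norm_num)
    have hseg : μ ∈ openSegment ℝ (fun i => μ i + 1 * (ε * d i))
        (fun i => μ i + (-1) * (ε * d i)) := by
      refine ⟨1/2, 1/2, by norm_num, by norm_num, by norm_num, ?_⟩
      funext i
      simp only [Pi.add_apply, Pi.smul_apply, smul_eq_mul]
      ring
    obtain ⟨heq, -⟩ := hext _ hx₁ _ hx₂ hseg
    have h2 := congrFun heq (i₀ : Fin n)
    simp only [one_mul] at h2
    have h3 : ε * d (i₀ : Fin n) = 0 := by linarith [h2]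
    rw [hdmem i₀] at h3
    rcases mul_eq_zero.mp h3 with h | h
    · exact absurd h hεpos.ne'
    · exact hgi₀ h
  -- counting contradiction
  rcases Finset.eq_empty_or_nonempty F with hFe | hFne
  · have hall : ∀ i ∈ Finset.univ, μ i = 1 := by
      intro i _
      by_contra hne
      have hlt : μ i < 1 := lt_of_le_of_ne (hμ01 i).2 hne
      have : i ∈ F := by simp [hF, hlt]
      rw [hFe] at this
      exact absurd this (Finset.notMem_empty i)
    have htot : ∑ i, μ i = (n:ℝ) := by
      rw [Finset.sum_congr rfl hall]; simp
    rw [hμsum] at htot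
    linarith [Nat.cast_nonneg (α := ℝ) k]
  · have hone : ∀ i ∈ Finset.univ.filter (fun i => ¬ μ i < 1), μ i = 1 := by
      intro i hi
      simp only [Finset.mem_filter, not_lt] at hi
      exact le_antisymm (hμ01 i).2 hi.2
    have hsplit := Finset.sum_filter_add_sum_filter_not Finset.univ (fun i => μ i < 1) μ
    rw [← hF] at hsplit
    have hcards := Finset.card_filter_add_card_filter_not
      (s := (Finset.univ : Finset (Fin n))) (p := fun i => μ i < 1)
    rw [← hF] at hcards
    simp only [Finset.card_univ, Fintype.card_fin] at hcards
    have hFn : F.card ≤ n := by omega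
    have hsum2 : ∑ i ∈ Finset.univ.filter (fun i => ¬ μ i < 1), μ i
        = (n:ℝ) - F.card := by
      rw [Finset.sum_congr rfl hone]
      simp only [Finset.sum_const, nsmul_eq_mul, mul_one]
      have hc2 : (Finset.univ.filter (fun i => ¬ μ i < 1)).card = n - F.card := by omega
      rw [hc2, Nat.cast_sub hFn]
    have hFsum : 0 < ∑ i ∈ F, μ i := Finset.sum_pos (fun i _ => hpos i) hFne
    have hFk : (F.card : ℝ) ≤ (k:ℝ) + 1 := by exact_mod_cast hcard
    rw [hsum2, hμsum] at hsplit
    linarith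


private lemma steinitz_listNormBound' {k : ℕ} (l : List (Fin k → ℝ)) (h : ∀ v ∈ l, ‖v‖ ≤ 1) :
    ‖l.sum‖ ≤ (l.length : ℝ) := by
  induction l with
  | nil => simp
  | cons a t ih =>
    simp only [List.sum_cons, List.length_cons]
    calc ‖a + t.sum‖ ≤ ‖a‖ + ‖t.sum‖ := norm_add_le _ _
      _ ≤ 1 + (t.length : ℝ) :=
        add_le_add (h a (by simp)) (ih fun v hv => h v (by simp [hv]))
      _ = ((t.length + 1 : ℕ) : ℝ) := by push_cast; ring


private lemma steinitz_main (k : ℕ) :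
    ∀ n, k ≤ n → ∀ v : Fin n → (Fin k → ℝ), (∀ i, ‖v i‖ ≤ 1) →
    (∃ lam : Fin n → ℝ, (∀ i, lam i ∈ Set.Icc (0:ℝ) 1) ∧ (∑ i, lam i = (n:ℝ) - k) ∧
      (∑ i, lam i • v i = 0)) →
    ∃ l' : List (Fin k → ℝ), (List.ofFn v).Perm l' ∧
      ∀ j : ℕ, ‖(l'.take j).sum‖ ≤ (k : ℝ) := by
  refine Nat.le_induction ?_ ?_
  · -- base case n = k
    intro v hv _
    refine ⟨List.ofFn v, List.Perm.refl _, fun j => ?_⟩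
    calc ‖((List.ofFn v).take j).sum‖ ≤ (((List.ofFn v).take j).length : ℝ) := by
          refine steinitz_listNormBound' _ fun w hw => ?_
          obtain ⟨i, rfl⟩ := List.mem_ofFn.mp (List.mem_of_mem_take hw)
          exact hv i
      _ ≤ (k : ℝ) := by
          simp [List.length_take, List.length_ofFn]
  · -- induction step
    intro n hn IH v hv hlam
    obtain ⟨lam, h01, hsum, hvs⟩ := hlam
    have hkn' : k < n + 1 := Nat.lt_succ_of_le hn
    obtain ⟨μ, hμ01, hμsum, hμvs, i₀, hμi₀⟩ :=
      steinitz_step k (n+1) hkn' v lam h01 hsum hvs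
    set e : Equiv.Perm (Fin (n+1)) := Equiv.swap 0 i₀ with he
    set w : Fin (n+1) → (Fin k → ℝ) := v ∘ e with hw
    set ν : Fin (n+1) → ℝ := μ ∘ e with hν
    have hν0 : ν 0 = 0 := by
      simp only [hν, he, Function.comp_apply, Equiv.swap_apply_left]
      exact hμi₀
    have hνsum : ∑ i, ν i = ∑ i, μ i := Equiv.sum_comp e μ
    have hνvs : ∑ i, ν i • w i = 0 := by
      have h := Equiv.sum_comp e (fun i => μ i • v i)
      simp only [hν, hw, Function.comp_apply]
      rw [h, hμvs]
    set v' : Fin n → (Fin k → ℝ) := fun i => w i.succ with hv'def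
    set lam' : Fin n → ℝ := fun i => ν i.succ with hlam'def
    have h1 : ∑ i, lam' i = (n:ℝ) - k := by
      have hs := Fin.sum_univ_succ ν
      rw [hν0, zero_add] at hs
      rw [hlam'def, ← hs, hνsum, hμsum]
      push_cast
      ring
    have h2 : ∑ i, lam' i • v' i = 0 := by
      have hs := Fin.sum_univ_succ (fun i => ν i • w i)
      rw [hν0, zero_smul, zero_add] at hs
      rw [hlam'def, hv'def, ← hs, hνvs]
    have hv'bd : ∀ i, ‖v' i‖ ≤ 1 := fun i => hv _
    obtain ⟨l'', hperm'', hpre''⟩ := IH v' hv'bd ⟨lam', fun i => hμ01 _, h1, h2⟩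
    refine ⟨l'' ++ [w 0], ?_, ?_⟩
    · have p1 : (List.ofFn v).Perm (List.ofFn w) := (e.ofFn_comp_perm v).symm
      have p2 : List.ofFn w = w 0 :: List.ofFn v' := List.ofFn_succ
      refine p1.trans ?_
      rw [p2]
      exact (hperm''.cons (w 0)).trans (List.perm_append_singleton _ _).symm
    · intro j
      by_cases hj : j ≤ l''.length
      · rw [List.take_append_of_le_length hj]
        exact hpre'' j
      · push_neg at hj
        have hlen : (l'' ++ [w 0]).length ≤ j := by
          simp only [List.length_append, List.length_singleton]
          omega
        rw [List.take_of_length_le hlen]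
        have hl''sum : l''.sum = ∑ i, v' i := by
          rw [← hperm''.sum_eq, List.sum_ofFn]
        have hsum_eq : (l'' ++ [w 0]).sum = ∑ i, v i := by
          rw [List.sum_append, hl''sum]
          have hs := Fin.sum_univ_succ w
          have hwv : ∑ i, w i = ∑ i, v i := Equiv.sum_comp e v
          simp only [List.sum_cons, List.sum_nil, add_zero]
          rw [← hwv, hs, hv'def]
          abel
        rw [hsum_eq]
        have hrepr : ∑ i, v i = ∑ i, (1 - lam i) • v i := by
          simp only [sub_smul, one_smul]
          rw [Finset.sum_sub_distrib, hvs, sub_zero]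
        rw [hrepr]
        calc ‖∑ i, (1 - lam i) • v i‖ ≤ ∑ i, ‖(1 - lam i) • v i‖ := norm_sum_le _ _
          _ ≤ ∑ i, (1 - lam i) := by
              refine Finset.sum_le_sum fun i _ => ?_
              rw [norm_smul, Real.norm_eq_abs, abs_of_nonneg (by linarith [(h01 i).2])]
              calc (1 - lam i) * ‖v i‖ ≤ (1 - lam i) * 1 :=
                    mul_le_mul_of_nonneg_left (hv i) (by linarith [(h01 i).2])
                _ = 1 - lam i := mul_one _
          _ = (k : ℝ) := by
              rw [Finset.sum_sub_distrib, hsum]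
              simp only [Finset.sum_const, Finset.card_univ, Fintype.card_fin, nsmul_eq_mul,
                mul_one]
              push_cast
              ring

/-- Trivial bound: a list of vectors of norm at most 1 has sum of norm at most its length. -/
private lemma steinitz_listNormBound {k : ℕ} (l : List (Fin k → ℝ)) (h : ∀ v ∈ l, ‖v‖ ≤ 1) :
    ‖l.sum‖ ≤ (l.length : ℝ) := by
  induction l with
  | nil => simp
  | cons a t ih =>
    simp only [List.sum_cons, List.length_cons]
    calc ‖a + t.sum‖ ≤ ‖a‖ + ‖t.sum‖ := norm_add_le _ _
      _ ≤ 1 + (t.length : ℝ) :=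
        add_le_add (h a (by simp)) (ih fun v hv => h v (by simp [hv]))
      _ = ((t.length + 1 : ℕ) : ℝ) := by push_cast; ring

private lemma steinitz_takeBound {k : ℕ} (l : List (Fin k → ℝ)) (h : ∀ v ∈ l, ‖v‖ ≤ 1)
    (j : ℕ) : ‖(l.take j).sum‖ ≤ (l.length : ℝ) := by
  calc ‖(l.take j).sum‖ ≤ ((l.take j).length : ℝ) :=
        steinitz_listNormBound _ (fun v hv => h v (List.mem_of_mem_take hv))
    _ ≤ (l.length : ℝ) := by
        simp [List.length_take]

/-- Steinitz's lemma in the ∞-norm (the norm on `Fin k → ℝ` is the sup norm). -/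
theorem stmt16 (k : ℕ) (hk : 1 ≤ k) (l : List (Fin k → ℝ))
    (hbd : ∀ v ∈ l, ‖v‖ ≤ 1) (hsum : l.sum = 0) :
    ∃ l' : List (Fin k → ℝ), l.Perm l' ∧
      ∀ j : ℕ, ‖(l'.take j).sum‖ ≤ (k : ℝ) := by
  classical
  by_cases hlen : l.length ≤ k
  · refine ⟨l, List.Perm.refl l, fun j => ?_⟩
    exact le_trans (steinitz_takeBound l hbd j) (Nat.cast_le.mpr hlen)
  · push_neg at hlen
    set n := l.length with hn
    set v : Fin n → (Fin k → ℝ) := l.get with hv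
    have hofn : List.ofFn v = l := List.ofFn_get l
    have hvbd : ∀ i, ‖v i‖ ≤ 1 := fun i => hbd _ (List.get_mem l i)
    have hnpos : (0:ℝ) < n := by
      have : 0 < n := lt_of_le_of_lt (Nat.zero_le k) hlen
      exact_mod_cast this
    have hkn : (k:ℝ) ≤ n := by exact_mod_cast hlen.le
    set lam : Fin n → ℝ := fun _ => ((n:ℝ) - k) / n with hlamdef
    have hsumv : ∑ i, v i = 0 := by
      rw [← List.sum_ofFn, hofn]
      exact hsum
    have hIcc : ∀ i, lam i ∈ Set.Icc (0:ℝ) 1 := by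
      intro i
      refine ⟨div_nonneg (by linarith) hnpos.le, ?_⟩
      rw [div_le_one hnpos]
      linarith [Nat.cast_nonneg (α := ℝ) k]
    have hlsum : ∑ i, lam i = (n:ℝ) - k := by
      simp only [hlamdef, Finset.sum_const, Finset.card_univ, Fintype.card_fin, nsmul_eq_mul]
      field_simp
    have hlvs : ∑ i, lam i • v i = 0 := by
      rw [← Finset.smul_sum, hsumv, smul_zero]
    obtain ⟨l', hperm, hpre⟩ := steinitz_main k n hlen.le v hvbd ⟨lam, hIcc, hlsum, hlvs⟩
    rw [hofn] at hperm
    exact ⟨l', hperm, hpre⟩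
end

section
/- Let k ≥ 2, c ∈ (0,1/2), and let w₁,…,w_k be weighted 1-uniform hypergraphs on [n] (probability distributions on [n]) with wᵢ(j) ≤ c for all i ∈ [k], j ∈ [n]. Assuming Steinitz's lemma (partial sums bounded by dimension in ∞-norm), there exists a chain ∅ ⊊ S₁ ⊊ … ⊊ Sₙ = [n] such that |w_{i₁}*(S_j) − w_{i₂}*(S_j)| ≤ 2(k−1)c for all i₁, i₂ ∈ [k] and j ∈ [n]. -/
open Finset

lemma exists_preimage_perm {α β : Type*} [DecidableEq α] (f : α → β) :
    ∀ (L : List β) (l : List α), (l.map f).Perm L → ∃ l₂ : List α, l.Perm l₂ ∧ l₂.map f = L := by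
  intro L
  induction L with
  | nil => intro l h; exact ⟨l, List.Perm.refl _, by simpa using h.eq_nil⟩
  | cons b L' ih =>
    intro l h
    have hb : b ∈ l.map f := h.symm.mem_iff.mp List.mem_cons_self
    obtain ⟨x, hx, hfx⟩ := List.mem_map.mp hb
    have hperm : l.Perm (x :: l.erase x) := List.perm_cons_erase hx
    have h2 : (f x :: (l.erase x).map f).Perm (b :: L') :=
      ((hperm.map f).symm.trans h)
    rw [hfx] at h2
    have h3 := h2.cons_inv
    obtain ⟨l₂', hp, hm⟩ := ih (l.erase x) h3
    exact ⟨x :: l₂', hperm.trans (hp.cons x), by simp [hfx, hm]⟩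

theorem stmt17 (k n : ℕ) (hk : 2 ≤ k) (hn : 1 ≤ n) (c : ℝ) (hc : 0 < c) (hc2 : c < 1/2)
    (hSteinitz : ∀ l : List (Fin (k - 1) → ℝ), (∀ v ∈ l, ‖v‖ ≤ 1) → l.sum = 0 →
      ∃ l' : List (Fin (k - 1) → ℝ), l.Perm l' ∧
        ∀ j : ℕ, ‖(l'.take j).sum‖ ≤ ((k : ℝ) - 1))
    (w : Fin k → Fin n → ℝ)
    (hw0 : ∀ i j, 0 ≤ w i j)
    (hw1 : ∀ i, ∑ j, w i j = 1)
    (hwc : ∀ i j, w i j ≤ c) :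
    ∃ S : Fin n → Finset (Fin n),
      (∀ j, (S j).card = (j : ℕ) + 1) ∧ Monotone S ∧
      S ⟨n - 1, by omega⟩ = Finset.univ ∧
      ∀ (i₁ i₂ : Fin k) (j : Fin n),
        |(∑ t ∈ S j, w i₁ t) - (∑ t ∈ S j, w i₂ t)| ≤ 2 * ((k : ℝ) - 1) * c := by
  set last : Fin k := ⟨k - 1, by omega⟩ with hlast
  set f : Fin n → (Fin (k - 1) → ℝ) :=
    fun t i => c⁻¹ * (w ⟨i.1, by omega⟩ t - w last t) with hf
  have habs : ∀ (i : Fin k) (t : Fin n), |w i t - w last t| ≤ c := by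
    intro i t
    rw [abs_sub_le_iff]
    constructor <;> nlinarith [hw0 i t, hw0 last t, hwc i t, hwc last t]
  have hnorm : ∀ v ∈ (List.finRange n).map f, ‖v‖ ≤ 1 := by
    intro v hv
    obtain ⟨t, _, rfl⟩ := List.mem_map.mp hv
    rw [pi_norm_le_iff_of_nonneg zero_le_one]
    intro i
    rw [Real.norm_eq_abs, hf, abs_mul, abs_of_nonneg (le_of_lt (inv_pos.mpr hc))]
    calc c⁻¹ * |w ⟨i.1, by omega⟩ t - w last t| ≤ c⁻¹ * c := by
          exact mul_le_mul_of_nonneg_left (habs _ t) (le_of_lt (inv_pos.mpr hc))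
      _ = 1 := inv_mul_cancel₀ (ne_of_gt hc)
  have hsum0 : ((List.finRange n).map f).sum = 0 := by
    rw [← List.ofFn_eq_map, List.sum_ofFn]
    funext i
    rw [Finset.sum_apply]
    simp only [hf]
    rw [← Finset.mul_sum, Finset.sum_sub_distrib, hw1, hw1]
    simp
  obtain ⟨l', hperm, hbd⟩ := hSteinitz _ hnorm hsum0
  obtain ⟨l₂, hp2, hmap⟩ := exists_preimage_perm f l' (List.finRange n) hperm
  have hnd : l₂.Nodup := hp2.nodup_iff.mp (List.nodup_finRange n)
  have hlen : l₂.length = n := by rw [← hp2.length_eq, List.length_finRange]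
  refine ⟨fun j => (l₂.take ((j : ℕ) + 1)).toFinset, ?_, ?_, ?_, ?_⟩
  · intro j
    rw [List.toFinset_card_of_nodup (hnd.sublist (List.take_sublist _ _)),
      List.length_take, hlen]
    omega
  · intro j j' hjj x hx
    rw [List.mem_toFinset] at *
    have : l₂.take ((j : ℕ) + 1) = (l₂.take ((j' : ℕ) + 1)).take ((j : ℕ) + 1) := by
      rw [List.take_take, min_eq_left (by omega : (j : ℕ) + 1 ≤ (j' : ℕ) + 1)]
    rw [this] at hx
    exact List.take_subset _ _ hx
  · ext x
    simp only [List.mem_toFinset, Finset.mem_univ, iff_true]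
    rw [List.take_of_length_le (by simp [hlen]; omega)]
    exact hp2.mem_iff.mp (List.mem_finRange x)
  · -- key bound
    have key : ∀ (i : Fin k) (j : Fin n),
        |(∑ t ∈ (l₂.take ((j : ℕ) + 1)).toFinset, w i t) -
         (∑ t ∈ (l₂.take ((j : ℕ) + 1)).toFinset, w last t)| ≤ ((k : ℝ) - 1) * c := by
      intro i j
      by_cases hi : i = last
      · subst hi
        simp only [sub_self, abs_zero]
        have hk1 : (1:ℝ) ≤ (k:ℝ) := by exact_mod_cast (by omega : 1 ≤ k)
        nlinarith
      · have hik : (i : ℕ) < k - 1 := by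
          have := i.2
          rcases Nat.lt_or_ge (i : ℕ) (k - 1) with h | h
          · exact h
          · exact absurd (Fin.ext (show (i : ℕ) = k - 1 by omega)) hi
        set i' : Fin (k - 1) := ⟨(i : ℕ), hik⟩ with hi'
        have hcast : (⟨i'.1, by omega⟩ : Fin k) = i := Fin.ext rfl
        have h1 := hbd ((j : ℕ) + 1)
        have h2 : |(l'.take ((j : ℕ) + 1)).sum i'| ≤ (k : ℝ) - 1 := by
          calc |(l'.take ((j : ℕ) + 1)).sum i'| = ‖(l'.take ((j : ℕ) + 1)).sum i'‖ := rfl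
            _ ≤ ‖(l'.take ((j : ℕ) + 1)).sum‖ := norm_le_pi_norm _ i'
            _ ≤ (k : ℝ) - 1 := h1
        have h3 : (l'.take ((j : ℕ) + 1)).sum i' =
            c⁻¹ * ((∑ t ∈ (l₂.take ((j : ℕ) + 1)).toFinset, w i t) -
              (∑ t ∈ (l₂.take ((j : ℕ) + 1)).toFinset, w last t)) := by
          have hnd' : (l₂.take ((j : ℕ) + 1)).Nodup := hnd.sublist (List.take_sublist _ _)
          rw [← hmap, ← List.map_take, ← List.sum_toFinset _ hnd', Finset.sum_apply]
          rw [← Finset.mul_sum, Finset.sum_sub_distrib]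
        rw [h3, abs_mul, abs_of_nonneg (le_of_lt (inv_pos.mpr hc))] at h2
        calc |(∑ t ∈ (l₂.take ((j : ℕ) + 1)).toFinset, w i t) -
              (∑ t ∈ (l₂.take ((j : ℕ) + 1)).toFinset, w last t)|
            = c * (c⁻¹ * |(∑ t ∈ (l₂.take ((j : ℕ) + 1)).toFinset, w i t) -
              (∑ t ∈ (l₂.take ((j : ℕ) + 1)).toFinset, w last t)|) := by
              field_simp
          _ ≤ c * ((k : ℝ) - 1) := mul_le_mul_of_nonneg_left h2 (le_of_lt hc)
          _ = ((k : ℝ) - 1) * c := mul_comm _ _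
    intro i₁ i₂ j
    have k1 := key i₁ j
    have k2 := key i₂ j
    rw [abs_sub_comm] at k2
    calc |(∑ t ∈ (l₂.take ((j : ℕ) + 1)).toFinset, w i₁ t) -
          (∑ t ∈ (l₂.take ((j : ℕ) + 1)).toFinset, w i₂ t)|
        ≤ _ + _ := abs_sub_le _ (∑ t ∈ (l₂.take ((j : ℕ) + 1)).toFinset, w last t) _
      _ ≤ ((k : ℝ) - 1) * c + ((k : ℝ) - 1) * c := add_le_add k1 k2
      _ = 2 * ((k : ℝ) - 1) * c := by ring
end

section
/- Let G be a bipartite graph with bipartition (A, B), B partitioned into blocks B₁,…,B_k each of size m, every vertex of B of degree exactly r ≥ 1, and every vertex of A with at most cm neighbors in each block, where c ∈ (0,1/2) and k ≥ 2. Suppose for some ordering v₁,…,vₙ of A and all j ∈ [n] the sets A_j = {v₁,…,v_j} satisfy | |N(A_j, B_{i₁})| − |N(A_j, B_{i₂})| | ≤ Cm for all i₁, i₂ ∈ [k], where C + c < 1/2. Then there exists S ⊆ A with |N(S, B₁)| ≥ (1/2 − C − c)m and |N(S, Bᵢ)| ≤ m/2 for all i ∈ {2,…,k}. -/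
open Finset
open scoped Classical

theorem stmt19 (k m r n : ℕ) (hk : 2 ≤ k) (hr : 1 ≤ r)
    (c C : ℝ) (hc : 0 < c) (hc2 : c < 1/2) (hCc : C + c < 1/2)
    (α β : Type) [Fintype α] [Fintype β]
    (E : α → β → Prop)
    (Bl : Fin k → Finset β)
    (hdisj : ∀ i₁ i₂, i₁ ≠ i₂ → Disjoint (Bl i₁) (Bl i₂))
    (hcover : ∀ b : β, ∃ i, b ∈ Bl i)
    (hcard : ∀ i, (Bl i).card = m)
    (hdeg : ∀ b : β, (Finset.univ.filter (fun a => E a b)).card = r)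
    (hnbr : ∀ a : α, ∀ i, (((Bl i).filter (fun b => E a b)).card : ℝ) ≤ c * m)
    (hn : n = Fintype.card α)
    (v : Fin n ≃ α)
    (hbal : ∀ (j : Fin n) (i₁ i₂ : Fin k),
      |(((Bl i₁).filter (fun b => ∃ t, t ≤ j ∧ E (v t) b)).card : ℝ)
        - (((Bl i₂).filter (fun b => ∃ t, t ≤ j ∧ E (v t) b)).card : ℝ)| ≤ C * m) :
    ∃ S : Finset α,
      (1/2 - C - c) * m ≤ (((Bl ⟨0, by omega⟩).filter (fun b => ∃ a ∈ S, E a b)).card : ℝ) ∧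
      ∀ i : Fin k, i ≠ ⟨0, by omega⟩ → (((Bl i).filter (fun b => ∃ a ∈ S, E a b)).card : ℝ) ≤ m / 2 := by
  by_cases hm : m = 0
  · refine ⟨∅, ?_, ?_⟩
    · simp [hm]
    · intro i _
      have h1 : ((Bl i).filter (fun b => ∃ a ∈ (∅ : Finset α), E a b)).card ≤ m :=
        (Finset.card_filter_le _ _).trans (hcard i).le
      have : (((Bl i).filter (fun b => ∃ a ∈ (∅ : Finset α), E a b)).card : ℝ) ≤ m := by
        exact_mod_cast h1
      simp only [hm, Nat.cast_zero] at this ⊢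
      linarith
  have hm' : 0 < m := Nat.pos_of_ne_zero hm
  set Nf : ℕ → Fin k → ℕ :=
    fun s i => ((Bl i).filter (fun b => ∃ t : Fin n, t.val < s ∧ E (v t) b)).card with hNf
  set i₀ : Fin k := ⟨0, by omega⟩ with hi₀
  -- full neighborhood
  have hfull : ∀ i, Nf n i = m := by
    intro i
    have hEq : (Bl i).filter (fun b => ∃ t : Fin n, t.val < n ∧ E (v t) b) = Bl i := by
      apply Finset.filter_true_of_mem
      intro b _
      have hne : (Finset.univ.filter (fun a => E a b)).Nonempty := by
        rw [← Finset.card_pos, hdeg b]; exact hr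
      obtain ⟨a, ha⟩ := hne
      refine ⟨v.symm a, (v.symm a).isLt, ?_⟩
      have := (Finset.mem_filter.mp ha).2
      simpa using this
    simp only [hNf, hEq, hcard i]
  have hn1 : 1 ≤ n := by
    by_contra hcn
    have hn0 : n = 0 := by omega
    have := hfull i₀
    subst hn0
    have hz : Nf 0 i₀ = 0 := by
      simp [hNf]
    omega
  -- step bound
  have hstep : ∀ s, ∀ (hs : s < n), ∀ i, (Nf (s+1) i : ℝ) ≤ Nf s i + c * m := by
    intro s hs i
    have hsub : (Bl i).filter (fun b => ∃ t : Fin n, t.val < s+1 ∧ E (v t) b) ⊆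
        (Bl i).filter (fun b => ∃ t : Fin n, t.val < s ∧ E (v t) b) ∪
          (Bl i).filter (fun b => E (v ⟨s, hs⟩) b) := by
      intro b hb
      simp only [Finset.mem_filter, Finset.mem_union] at hb ⊢
      obtain ⟨hbB, t, ht, hE⟩ := hb
      rcases lt_or_eq_of_le (Nat.lt_succ_iff.mp ht) with h | h
      · exact Or.inl ⟨hbB, t, h, hE⟩
      · refine Or.inr ⟨hbB, ?_⟩
        have ht' : t = ⟨s, hs⟩ := Fin.ext h
        rwa [ht'] at hE
    have hcle := (Finset.card_le_card hsub).trans (Finset.card_union_le _ _)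
    have h2 := hnbr (v ⟨s, hs⟩) i
    have hcle' : (Nf (s+1) i : ℝ) ≤ (Nf s i : ℝ) +
        (((Bl i).filter (fun b => E (v ⟨s, hs⟩) b)).card : ℝ) := by exact_mod_cast hcle
    linarith
  have hP : ∃ s, ∃ i : Fin k, (m : ℝ)/2 < Nf s i := by
    refine ⟨n, i₀, ?_⟩
    rw [hfull i₀]
    have : (0:ℝ) < m := by exact_mod_cast hm'
    linarith
  set s₀ := Nat.find hP with hs₀def
  have hspec : ∃ i : Fin k, (m : ℝ)/2 < Nf s₀ i := Nat.find_spec hP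
  have hmin : ∀ s < s₀, ¬ ∃ i : Fin k, (m : ℝ)/2 < Nf s i := fun s hs => Nat.find_min hP hs
  have hmR : (0:ℝ) < m := by exact_mod_cast hm'
  have hs₀n : s₀ ≤ n := Nat.find_le (by
    refine ⟨i₀, ?_⟩
    rw [hfull i₀]
    linarith)
  have hs₀0 : s₀ ≠ 0 := by
    intro h0
    obtain ⟨i, hi⟩ := hspec
    rw [h0] at hi
    have hz : Nf 0 i = 0 := by simp [hNf]
    rw [hz] at hi
    norm_num at hi
    linarith
  have hs₀1 : s₀ ≠ 1 := by
    intro h1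
    obtain ⟨i, hi⟩ := hspec
    rw [h1] at hi
    have hz : Nf 0 i = 0 := by simp [hNf]
    have := hstep 0 (by omega) i
    rw [hz] at this
    push_cast at this
    nlinarith
  have hs₀2 : 2 ≤ s₀ := by omega
  set s₁ := s₀ - 1 with hs₁def
  have hs₁n : s₁ < n := by omega
  have hs₁s₀ : s₁ + 1 = s₀ := by omega
  have hlow : ∀ i : Fin k, (Nf s₁ i : ℝ) ≤ (m:ℝ)/2 := by
    intro i
    by_contra hlt
    exact hmin s₁ (by omega) ⟨i, by linarith⟩
  obtain ⟨istar, histar⟩ := hspec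
  have hstep' := hstep s₁ hs₁n istar
  rw [hs₁s₀] at hstep'
  have hN1 : (m:ℝ)/2 - c * m < (Nf s₁ istar : ℝ) := by linarith
  -- balance at j = s₀ - 2
  set j : Fin n := ⟨s₀ - 2, by omega⟩ with hj
  have hconv : ∀ i : Fin k, (Bl i).filter (fun b => ∃ t, t ≤ j ∧ E (v t) b) =
      (Bl i).filter (fun b => ∃ t : Fin n, t.val < s₁ ∧ E (v t) b) := by
    intro i
    apply Finset.filter_congr
    intro b _
    constructor
    · rintro ⟨t, ht, hE⟩
      exact ⟨t, by rw [Fin.le_def] at ht; simp only [hj] at ht; omega, hE⟩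
    · rintro ⟨t, ht, hE⟩
      exact ⟨t, by rw [Fin.le_def]; simp only [hj]; omega, hE⟩
  have hbal' := hbal j istar i₀
  rw [hconv istar, hconv i₀] at hbal'
  have habs := abs_le.mp hbal'
  have hN0 : (1/2 - C - c) * m < (Nf s₁ i₀ : ℝ) := by
    have h1 := habs.1
    nlinarith
  -- the set S
  refine ⟨((Finset.univ : Finset (Fin n)).filter (fun t => t.val < s₁)).image v, ?_, ?_⟩
  · refine le_trans hN0.le ?_
    norm_cast
    apply Finset.card_le_card
    intro b hb
    simp only [Finset.mem_filter, Finset.mem_image, Finset.mem_univ, true_and] at hb ⊢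
    obtain ⟨hbB, t, ht, hE⟩ := hb
    exact ⟨hbB, v t, ⟨t, ht, rfl⟩, hE⟩
  · intro i _
    refine le_trans ?_ (hlow i)
    norm_cast
    apply Finset.card_le_card
    intro b hb
    simp only [Finset.mem_filter, Finset.mem_image, Finset.mem_univ, true_and] at hb ⊢
    obtain ⟨hbB, a, ⟨t, ht, rfl⟩, hE⟩ := hb
    exact ⟨hbB, t, ht, hE⟩
end
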